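/- arXiv:1905.10926 — 9 statements merged into one kernel-verified Lean document; each statement's English description precedes it below -/
import Mathlib

section
/- Let f : ℝⁿ → ℝ be differentiable, let g : ℝⁿ → ℝ be continuous and semi-convex with modulus ρ > 0 (i.e. g + (ρ/2)‖·‖² is convex), let K : ℝⁿ → ℝ be differentiable and m-strongly convex with m > 0, and let 0 < ε < m/ρ. Fix x ∈ ℝⁿ and define φ(y) = ⟨∇f(x), y − x⟩ + g(y) + (1/ε)D(x,y). Then φ has at most one global minimizer: if y₁ and y₂ both minimize φ over ℝⁿ, then y₁ = y₂. -/
open RealInnerProductSpace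

set_option maxHeartbeats 2000000 in
/-- With `f` differentiable, `g` continuous and semi-convex with modulus `ρ`,
`K` differentiable and `m`-strongly convex, and `0 < ε < m/ρ`, the function
`φ(y) = ⟪∇f x, y - x⟫ + g y + (1/ε) D x y` has at most one global minimizer. -/
theorem stmt_1 {n : ℕ}
    (f g K : EuclideanSpace ℝ (Fin n) → ℝ)
    (f' K' : EuclideanSpace ℝ (Fin n) → EuclideanSpace ℝ (Fin n))
    (ρ m ε : ℝ) (hρ : 0 < ρ) (hm : 0 < m)
    (hf : ∀ x, HasGradientAt f (f' x) x)
    (hg : Continuous g)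
    (hgsc : ConvexOn ℝ Set.univ (fun x => g x + ρ / 2 * ‖x‖ ^ 2))
    (hK : ∀ x, HasGradientAt K (K' x) x)
    (hKsc : ConvexOn ℝ Set.univ (fun x => K x - m / 2 * ‖x‖ ^ 2))
    (hε : 0 < ε) (hεm : ε < m / ρ)
    (D : EuclideanSpace ℝ (Fin n) → EuclideanSpace ℝ (Fin n) → ℝ)
    (hD : ∀ x y, D x y = K y - (K x + ⟪K' x, y - x⟫))
    (x : EuclideanSpace ℝ (Fin n))
    (φ : EuclideanSpace ℝ (Fin n) → ℝ)
    (hφ : ∀ y, φ y = ⟪f' x, y - x⟫ + g y + (1 / ε) * D x y)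
    (y₁ y₂ : EuclideanSpace ℝ (Fin n))
    (h₁ : ∀ y, φ y₁ ≤ φ y) (h₂ : ∀ y, φ y₂ ≤ φ y) :
    y₁ = y₂ := by
  set z := (1/2 : ℝ) • y₁ + (1/2 : ℝ) • y₂ with hzdef
  have hzg := hgsc.2 (Set.mem_univ y₁) (Set.mem_univ y₂)
    (by norm_num : (0:ℝ) ≤ 1/2) (by norm_num : (0:ℝ) ≤ 1/2) (by norm_num)
  have hzK := hKsc.2 (Set.mem_univ y₁) (Set.mem_univ y₂)
    (by norm_num : (0:ℝ) ≤ 1/2) (by norm_num : (0:ℝ) ≤ 1/2) (by norm_num)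
  simp only [smul_eq_mul] at hzg hzK
  -- norm identity
  have hpar := parallelogram_law_with_norm ℝ y₁ y₂
  have hnz : ‖z‖ = (1/2 : ℝ) * ‖y₁ + y₂‖ := by
    have : z = (1/2 : ℝ) • (y₁ + y₂) := by rw [hzdef]; module
    rw [this, norm_smul]
    norm_num
  have hzsq : ‖z‖^2 = (‖y₁‖^2 + ‖y₂‖^2)/2 - ‖y₁ - y₂‖^2/4 := by
    rw [hnz]
    nlinarith [hpar, norm_nonneg (y₁ + y₂), norm_nonneg (y₁ - y₂)]
  -- inner products are affine
  have hinner : ∀ v : EuclideanSpace ℝ (Fin n),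
      ⟪v, z - x⟫ = (1/2 : ℝ) * ⟪v, y₁ - x⟫ + (1/2 : ℝ) * ⟪v, y₂ - x⟫ := by
    intro v
    have hzx : z - x = (1/2 : ℝ) • (y₁ - x) + (1/2 : ℝ) • (y₂ - x) := by
      rw [hzdef]; module
    rw [hzx, inner_add_right, real_inner_smul_right, real_inner_smul_right]
  -- key bounds
  have eg : ρ/2 * ‖z‖^2 = ρ/2 * ((‖y₁‖^2 + ‖y₂‖^2)/2 - ‖y₁ - y₂‖^2/4) := by
    rw [hzsq]
  have eK : m/2 * ‖z‖^2 = m/2 * ((‖y₁‖^2 + ‖y₂‖^2)/2 - ‖y₁ - y₂‖^2/4) := by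
    rw [hzsq]
  have hgz : g z ≤ 1/2 * g y₁ + 1/2 * g y₂ + ρ/2 * (‖y₁ - y₂‖^2/4) := by
    linarith [hzg, eg]
  have hKz : K z ≤ 1/2 * K y₁ + 1/2 * K y₂ - m/2 * (‖y₁ - y₂‖^2/4) := by
    linarith [hzK, eK]
  have hc : ρ < m / ε := by
    rw [lt_div_iff₀ hε]
    rw [lt_div_iff₀ hρ] at hεm
    linarith
  have hεinv : (0:ℝ) < 1/ε := by positivity
  have hA := h₁ z
  have hB := h₂ z
  have hφz := hφ z
  have hφ1 := hφ y₁
  have hφ2 := hφ y₂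
  rw [hD] at hφz hφ1 hφ2
  rw [hinner (f' x), hinner (K' x)] at hφz
  have hnn : (0:ℝ) ≤ ‖y₁ - y₂‖^2 := by positivity
  have key : ‖y₁ - y₂‖^2 ≤ 0 := by
    have hcomb : φ y₁ + φ y₂ ≤ 2 * φ z := by linarith
    have hφzle : φ z ≤ 1/2 * φ y₁ + 1/2 * φ y₂
        + (ρ/2 - (1/ε) * (m/2)) * (‖y₁ - y₂‖^2/4) := by
      rw [hφz, hφ1, hφ2]
      have hmul := mul_le_mul_of_nonneg_left hKz (le_of_lt hεinv)
      have hexp : (1/ε) * (1/2 * K y₁ + 1/2 * K y₂ - m/2 * (‖y₁ - y₂‖^2/4))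
          = 1/ε * (1/2 * K y₁) + 1/ε * (1/2 * K y₂) - 1/ε * (m/2) * (‖y₁ - y₂‖^2/4) := by
        ring
      rw [hexp] at hmul
      linarith [hgz, hmul]
    have hcpos : (0:ℝ) < (1/ε) * (m/2) - ρ/2 := by
      have h1 : ρ/2 < (m/ε)/2 := by linarith
      have h2 : (1/ε) * (m/2) = (m/ε)/2 := by ring
      linarith
    have hd : 0 ≤ (ρ/2 - 1/ε * (m/2)) * (‖y₁ - y₂‖^2/4) := by linarith
    have hd2 : ((1/ε) * (m/2) - ρ/2) * (‖y₁ - y₂‖^2/4) ≤ ((1/ε) * (m/2) - ρ/2) * 0 := by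
      rw [mul_zero]; linarith
    have hd3 := (mul_le_mul_iff_right₀ hcpos).mp hd2
    linarith
  have : y₁ - y₂ = 0 := by
    have h0 : ‖y₁ - y₂‖^2 = 0 := le_antisymm key hnn
    have : ‖y₁ - y₂‖ = 0 := by
      exact pow_eq_zero_iff (n := 2) (by norm_num) |>.mp h0
    exact norm_eq_zero.mp this
  have := sub_eq_zero.mp this
  exact this
end

section
/- Let f : ℝⁿ → ℝ be differentiable with L-Lipschitz gradient ∇f, let g : ℝⁿ → ℝ be continuous, let K : ℝⁿ → ℝ be differentiable and m-strongly convex, and let 0 < ε ≤ ε̄ < m/L. Set F = f + g and a = (m − ε̄L)/(2ε̄). Fix x ∈ ℝⁿ and suppose y* globally minimizes y ↦ ⟨∇f(x), y − x⟩ + g(y) + (1/ε)D(x,y) over ℝⁿ. Then F(y*) − F(x) ≤ −a‖x − y*‖². -/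
open RealInnerProductSpace Filter Topology

variable {E : Type*} [NormedAddCommGroup E] [InnerProductSpace ℝ E] [CompleteSpace E]

lemma line_hasDerivAt (φ : E → ℝ) (φ' : E → E) (h : ∀ z, HasGradientAt φ (φ' z) z)
    (x d : E) (t : ℝ) :
    HasDerivAt (fun s : ℝ => φ (x + s • d)) ⟪φ' (x + t • d), d⟫ t := by
  have hline : HasDerivAt (fun s : ℝ => x + s • d) d t := by
    simpa using ((hasDerivAt_id t).smul_const d).const_add x
  have := ((h (x + t • d)).hasFDerivAt).comp_hasDerivAt t hline
  simpa [InnerProductSpace.toDual_apply_apply, Function.comp_def] using this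

/-- descent lemma -/
lemma descent_lemma (f : E → ℝ) (f' : E → E) (L : ℝ)
    (hf : ∀ z, HasGradientAt f (f' z) z)
    (hflip : ∀ u v, ‖f' u - f' v‖ ≤ L * ‖u - v‖) (x y : E) :
    f y ≤ f x + ⟪f' x, y - x⟫ + L / 2 * ‖y - x‖ ^ 2 := by
  set d := y - x with hd
  set h : ℝ → ℝ := fun t => f x + t * ⟪f' x, d⟫ + L * t ^ 2 / 2 * ‖d‖ ^ 2 - f (x + t • d)
    with hh
  have hderiv : ∀ t : ℝ, HasDerivAt h
      (⟪f' x, d⟫ + L * t * ‖d‖ ^ 2 - ⟪f' (x + t • d), d⟫) t := by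
    intro t
    have h1 : HasDerivAt (fun t : ℝ => f x + t * ⟪f' x, d⟫ + L * t ^ 2 / 2 * ‖d‖ ^ 2)
        (⟪f' x, d⟫ + L * t * ‖d‖ ^ 2) t := by
      have : HasDerivAt (fun t : ℝ => f x + t * ⟪f' x, d⟫ + L * t ^ 2 / 2 * ‖d‖ ^ 2)
          (0 + 1 * ⟪f' x, d⟫ + L * (2 * t ^ 1) / 2 * ‖d‖ ^ 2) t := by
        exact (((hasDerivAt_const t (f x)).add
          ((hasDerivAt_id t).mul_const _)).add
          ((((hasDerivAt_pow 2 t).const_mul L).div_const 2).mul_const _))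
      convert this using 1; ring
    exact h1.sub (line_hasDerivAt f f' hf x d t)
  have hmono : MonotoneOn h (Set.Icc (0:ℝ) 1) := by
    apply monotoneOn_of_deriv_nonneg (convex_Icc 0 1)
    · exact (fun t _ => (hderiv t).differentiableAt.continuousAt.continuousWithinAt)
    · exact fun t _ => (hderiv t).differentiableAt.differentiableWithinAt
    · intro t ht
      rw [(hderiv t).deriv]
      rw [interior_Icc] at ht
      have h2 : ⟪f' (x + t • d) - f' x, d⟫ ≤ L * t * ‖d‖ ^ 2 := by
        calc ⟪f' (x + t • d) - f' x, d⟫ ≤ ‖f' (x + t • d) - f' x‖ * ‖d‖ :=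
              real_inner_le_norm _ _
          _ ≤ L * ‖(x + t • d) - x‖ * ‖d‖ := by
              gcongr; exact hflip _ _
          _ = L * t * ‖d‖ ^ 2 := by
              simp [norm_smul, abs_of_pos ht.1]; ring
      have h3 : ⟪f' (x + t • d) - f' x, d⟫ = ⟪f' (x + t • d), d⟫ - ⟪f' x, d⟫ :=
        inner_sub_left _ _ _
      linarith
  have := hmono (Set.left_mem_Icc.2 zero_le_one) (Set.right_mem_Icc.2 zero_le_one) zero_le_one
  simp only [hh] at this
  simp only [zero_smul, add_zero, one_smul] at this
  have hxy : x + d = y := by rw [hd]; abel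
  rw [hxy] at this
  nlinarith [this]

/-- strong convexity lower bound for Bregman distance -/
lemma strong_lb (K : E → ℝ) (K' : E → E) (m : ℝ)
    (hK : ∀ z, HasGradientAt K (K' z) z)
    (hKsc : ConvexOn ℝ Set.univ (fun z => K z - m / 2 * ‖z‖ ^ 2)) (x y : E) :
    m / 2 * ‖y - x‖ ^ 2 ≤ K y - K x - ⟪K' x, y - x⟫ := by
  set d := y - x with hd
  have hA : True := trivial
  have key : ⟪K' x, d⟫ ≤ ((K y - m / 2 * ‖y‖ ^ 2) - (K x - m / 2 * ‖x‖ ^ 2)) + m * ⟪x, d⟫ := by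
    have hline : HasDerivAt (fun s : ℝ => K (x + s • d)) ⟪K' x, d⟫ 0 := by
      simpa using line_hasDerivAt K K' hK x d 0
    have hS : Tendsto (fun t : ℝ => (K (x + t • d) - K x) / t) (𝓝[>] 0)
        (𝓝 ⟪K' x, d⟫) := by
      have h1 := (hasDerivAt_iff_tendsto_slope.1 hline).mono_left
        (nhdsWithin_mono _ (fun t (ht : t ∈ Set.Ioi (0:ℝ)) => ne_of_gt ht))
      refine h1.congr' ?_
      filter_upwards [self_mem_nhdsWithin] with t ht
      rw [slope_def_field]
      simp [div_eq_inv_mul]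
    have hT : Tendsto (fun t : ℝ => ((K y - m / 2 * ‖y‖ ^ 2) - (K x - m / 2 * ‖x‖ ^ 2)) + m / 2 * (2 * ⟪x, d⟫ + t * ‖d‖ ^ 2)) (𝓝[>] 0)
        (𝓝 (((K y - m / 2 * ‖y‖ ^ 2) - (K x - m / 2 * ‖x‖ ^ 2)) + m * ⟪x, d⟫)) := by
      have hc : ContinuousAt (fun t : ℝ => ((K y - m / 2 * ‖y‖ ^ 2) - (K x - m / 2 * ‖x‖ ^ 2)) + m / 2 * (2 * ⟪x, d⟫ + t * ‖d‖ ^ 2)) 0 := by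
        fun_prop
      have h2 := hc.continuousWithinAt (s := Set.Ioi (0:ℝ))
      unfold ContinuousWithinAt at h2
      convert h2 using 2
      simp; ring
    refine le_of_tendsto_of_tendsto hS hT ?_
    filter_upwards [Ioc_mem_nhdsGT_of_mem (Set.left_mem_Ico.2 zero_lt_one)] with t ht
    have hcomb := hKsc.2 (Set.mem_univ x) (Set.mem_univ y)
      (by linarith [ht.1, ht.2] : (0:ℝ) ≤ 1 - t) (le_of_lt ht.1) (by ring)
    have hpt : (1 - t) • x + t • y = x + t • d := by
      rw [hd]; module
    rw [hpt] at hcomb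
    have hnorm : ‖x + t • d‖ ^ 2 = ‖x‖ ^ 2 + 2 * (t * ⟪x, d⟫) + t ^ 2 * ‖d‖ ^ 2 := by
      rw [norm_add_sq_real, real_inner_smul_right, norm_smul]
      simp [abs_of_pos ht.1]
      try ring
    have ht0 : 0 < t := ht.1
    rw [div_le_iff₀ ht0]
    simp only [smul_eq_mul] at hcomb
    rw [hnorm] at hcomb
    linarith [hcomb]
  have hinner : ⟪x, d⟫ = ⟪x, y⟫ - ‖x‖ ^ 2 := by
    rw [hd, inner_sub_right, real_inner_self_eq_norm_sq]
  have hnsq : ‖y - x‖ ^ 2 = ‖y‖ ^ 2 - 2 * ⟪x, y⟫ + ‖x‖ ^ 2 := by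
    rw [norm_sub_sq_real, real_inner_comm]
    try ring
  have h4 : m * ⟪x, d⟫ = m * ⟪x, y⟫ - m * ‖x‖ ^ 2 := by rw [hinner]; ring
  have h5 : m / 2 * ‖d‖ ^ 2 = m / 2 * ‖y‖ ^ 2 - m * ⟪x, y⟫ + m / 2 * ‖x‖ ^ 2 := by
    rw [hd, hnsq]; ring
  linarith [key, h4, h5]

/-- sufficient decrease for the full Bregman proximal step:
if `y*` minimizes `y ↦ ⟪∇f x, y - x⟫ + g y + (1/ε) D x y`, then
`F y* - F x ≤ -a ‖x - y*‖²` with `a = (m - ε̄L)/(2ε̄)`. -/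
theorem stmt_2 {n : ℕ}
    (f g K : EuclideanSpace ℝ (Fin n) → ℝ)
    (f' K' : EuclideanSpace ℝ (Fin n) → EuclideanSpace ℝ (Fin n))
    (L m ε εbar : ℝ)
    (hf : ∀ x, HasGradientAt f (f' x) x)
    (hflip : ∀ u v, ‖f' u - f' v‖ ≤ L * ‖u - v‖)
    (hg : Continuous g)
    (hK : ∀ x, HasGradientAt K (K' x) x)
    (hKsc : ConvexOn ℝ Set.univ (fun x => K x - m / 2 * ‖x‖ ^ 2))
    (hε : 0 < ε) (hεε : ε ≤ εbar) (hεbar : εbar < m / L)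
    (F : EuclideanSpace ℝ (Fin n) → ℝ) (hF : ∀ u, F u = f u + g u)
    (a : ℝ) (ha : a = (m - εbar * L) / (2 * εbar))
    (D : EuclideanSpace ℝ (Fin n) → EuclideanSpace ℝ (Fin n) → ℝ)
    (hD : ∀ u v, D u v = K v - (K u + ⟪K' u, v - u⟫))
    (x ystar : EuclideanSpace ℝ (Fin n))
    (hmin : ∀ y, ⟪f' x, ystar - x⟫ + g ystar + (1 / ε) * D x ystar
      ≤ ⟪f' x, y - x⟫ + g y + (1 / ε) * D x y) :
    F ystar - F x ≤ -a * ‖x - ystar‖ ^ 2 := by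
  rcases Nat.eq_zero_or_pos n with h0 | hpos
  · subst h0
    have hxy : ystar = x := Subsingleton.elim _ _
    simp [hxy]
  -- L > 0
  have hL0 : 0 ≤ L := by
    have h1 := hflip (EuclideanSpace.single ⟨0, hpos⟩ (1:ℝ)) 0
    have h2 : ‖EuclideanSpace.single (⟨0, hpos⟩ : Fin n) (1:ℝ) - 0‖ = 1 := by
      simp [EuclideanSpace.norm_single]
    rw [h2, mul_one] at h1
    exact le_trans (norm_nonneg _) h1
  have hL : 0 < L := by
    rcases hL0.lt_or_eq with hL | hL
    · exact hL
    · exfalso; rw [← hL, div_zero] at hεbar; linarith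
  have hm : 0 < m := by
    rw [lt_div_iff₀ hL] at hεbar
    nlinarith [mul_pos (lt_of_lt_of_le hε hεε) hL]
  have hεbarpos : 0 < εbar := lt_of_lt_of_le hε hεε
  set t : ℝ := ‖ystar - x‖ ^ 2 with htdef
  have ht : 0 ≤ t := sq_nonneg _
  have htx : ‖x - ystar‖ ^ 2 = t := by rw [htdef, norm_sub_rev]
  -- minimizer at y = x
  have key1 : ⟪f' x, ystar - x⟫ + g ystar + (1 / ε) * D x ystar ≤ g x := by
    have := hmin x
    have hDxx : D x x = 0 := by simp [hD]
    simpa [hDxx] using this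
  -- descent
  have hdesc : f ystar ≤ f x + ⟪f' x, ystar - x⟫ + L / 2 * t :=
    descent_lemma f f' L hf hflip x ystar
  -- strong convexity lower bound
  have hstr : m / 2 * t ≤ D x ystar := by
    rw [htdef, hD]
    linarith [strong_lb K K' m hK hKsc x ystar]
  have hDge : (1 / ε) * (m / 2 * t) ≤ (1 / ε) * D x ystar :=
    mul_le_mul_of_nonneg_left hstr (by positivity)
  have hfrac : a ≤ m / (2 * ε) - L / 2 := by
    rw [ha]
    have h2 : m / (2 * ε) - L / 2 = (m - ε * L) / (2 * ε) := by field_simp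
    rw [h2, div_le_div_iff₀ (by positivity) (by positivity)]
    nlinarith [mul_le_mul_of_nonneg_right hεε hm.le]
  have h1e : (1 / ε) * (m / 2 * t) = m / (2 * ε) * t := by
    ring
  have hfin : -(m / (2 * ε) - L / 2) * t ≤ -a * t := by
    have := mul_le_mul_of_nonneg_right hfrac ht
    nlinarith [this]
  rw [hF, hF, htx]
  nlinarith [key1, hdesc, hDge, hfin, h1e]
end

section
/- Let f : ℝⁿ → ℝ be differentiable with L-Lipschitz gradient, let g : ℝⁿ → ℝ be continuous, let K : ℝⁿ → ℝ be differentiable with M-Lipschitz gradient, and let ε ≥ ε̲ > 0. Set F = f + g, fix x̄ ∈ ℝⁿ with F̄ = F(x̄), and let S = {u : F(u) ≤ F̄} (nonempty since x̄ ∈ S). Fix x ∈ ℝⁿ and suppose z* globally minimizes y ↦ f(x) + ⟨∇f(x), y − x⟩ + g(y) + (1/ε)D(x,y), with attained minimum value E(x). Then E(x) − F̄ ≤ θ₂·dist(x, S)², where θ₂ = (3/2)L + M/(2ε̲) and dist(x,S) = inf_{u∈S} ‖x − u‖. -/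
open RealInnerProductSpace

lemma descent_aux {n : ℕ} (f : EuclideanSpace ℝ (Fin n) → ℝ)
    (f' : EuclideanSpace ℝ (Fin n) → EuclideanSpace ℝ (Fin n)) (L : ℝ)
    (hf : ∀ x, HasGradientAt f (f' x) x)
    (hlip : ∀ u v, ‖f' u - f' v‖ ≤ L * ‖u - v‖)
    (x y : EuclideanSpace ℝ (Fin n)) :
    f y ≤ f x + ⟪f' x, y - x⟫ + L / 2 * ‖y - x‖ ^ 2 := by
  set c : ℝ → EuclideanSpace ℝ (Fin n) := fun t => x + t • (y - x) with hc
  set ψ : ℝ → ℝ := fun t => f (c t) - t * ⟪f' x, y - x⟫ - L / 2 * t ^ 2 * ‖y - x‖ ^ 2 with hψ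
  have hcd : ∀ t : ℝ, HasDerivAt c (y - x) t := fun t => by
    have := ((hasDerivAt_id t).smul_const (y - x)).const_add x
    simp only [one_smul] at this
    exact this
  have hφd : ∀ t : ℝ, HasDerivAt (fun s => f (c s)) ⟪f' (c t), y - x⟫ t := fun t => by
    have h1 : HasFDerivAt f (InnerProductSpace.toDual ℝ _ (f' (c t))) (c t) := hf (c t)
    have := h1.comp_hasDerivAt t (hcd t)
    simp at this
    exact this
  have hψd : ∀ t : ℝ, HasDerivAt ψ
      (⟪f' (c t), y - x⟫ - ⟪f' x, y - x⟫ - L / 2 * (2 * t) * ‖y - x‖ ^ 2) t := fun t => by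
    have h2 : HasDerivAt (fun s : ℝ => s * ⟪f' x, y - x⟫) ⟪f' x, y - x⟫ t := by
      simpa using (hasDerivAt_id t).mul_const ⟪f' x, y - x⟫
    have h3 : HasDerivAt (fun s : ℝ => L / 2 * s ^ 2 * ‖y - x‖ ^ 2)
        (L / 2 * (2 * t) * ‖y - x‖ ^ 2) t := by
      have := ((hasDerivAt_pow 2 t).const_mul (L / 2)).mul_const (‖y - x‖ ^ 2)
      simpa [mul_comm, mul_assoc, mul_left_comm] using this
    have h1 : HasDerivAt ψ (⟪f' (c t), y - x⟫ - ⟪f' x, y - x⟫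
        - L / 2 * (2 * t) * ‖y - x‖ ^ 2) t := ((hφd t).sub h2).sub h3
    exact h1
  have hanti : AntitoneOn ψ (Set.Icc (0:ℝ) 1) := by
    apply antitoneOn_of_deriv_nonpos (convex_Icc 0 1)
    · exact Continuous.continuousOn (by
        apply (continuous_iff_continuousAt.2 fun t => (hψd t).continuousAt))
    · intro t _
      exact (hψd t).differentiableAt.differentiableWithinAt
    · intro t ht
      rw [interior_Icc] at ht
      rw [(hψd t).deriv]
      have hct : ‖c t - x‖ = t * ‖y - x‖ := by
        simp [hc, norm_smul, abs_of_pos ht.1]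
      have h4 : ⟪f' (c t) - f' x, y - x⟫ ≤ ‖f' (c t) - f' x‖ * ‖y - x‖ :=
        real_inner_le_norm _ _
      have h5 : ‖f' (c t) - f' x‖ ≤ L * (t * ‖y - x‖) := by
        simpa [hct] using hlip (c t) x
      have h6 : ⟪f' (c t) - f' x, y - x⟫ = ⟪f' (c t), y - x⟫ - ⟪f' x, y - x⟫ :=
        inner_sub_left _ _ _
      have hn : (0:ℝ) ≤ ‖y - x‖ := norm_nonneg _
      nlinarith [norm_nonneg (f' (c t) - f' x)]
  have key := hanti (Set.mem_Icc.2 ⟨le_refl 0, zero_le_one⟩)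
    (Set.mem_Icc.2 ⟨zero_le_one, le_refl 1⟩) zero_le_one
  have h0 : ψ 0 = f x := by simp [hψ, hc]
  have h1 : ψ 1 = f y - ⟪f' x, y - x⟫ - L / 2 * ‖y - x‖ ^ 2 := by simp [hψ, hc]
  rw [h0, h1] at key
  linarith

/-- upper bound of the Bregman proximal envelope by the squared distance
to the level set: `E(x) - F̄ ≤ θ₂ · dist(x, S)²` with `θ₂ = (3/2)L + M/(2ε̲)` and
`S = {u | F u ≤ F̄}`. -/
theorem stmt_6 {n : ℕ}
    (f g K : EuclideanSpace ℝ (Fin n) → ℝ)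
    (f' K' : EuclideanSpace ℝ (Fin n) → EuclideanSpace ℝ (Fin n))
    (L M ε εlow : ℝ)
    (hf : ∀ x, HasGradientAt f (f' x) x)
    (hflip : ∀ u v, ‖f' u - f' v‖ ≤ L * ‖u - v‖)
    (hg : Continuous g)
    (hK : ∀ x, HasGradientAt K (K' x) x)
    (hKlip : ∀ u v, ‖K' u - K' v‖ ≤ M * ‖u - v‖)
    (hεlow : 0 < εlow) (hε : εlow ≤ ε)
    (F : EuclideanSpace ℝ (Fin n) → ℝ) (hF : ∀ u, F u = f u + g u)
    (xbar : EuclideanSpace ℝ (Fin n)) (Fbar : ℝ) (hFbar : Fbar = F xbar)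
    (S : Set (EuclideanSpace ℝ (Fin n))) (hS : S = {u | F u ≤ Fbar})
    (D : EuclideanSpace ℝ (Fin n) → EuclideanSpace ℝ (Fin n) → ℝ)
    (hD : ∀ u v, D u v = K v - (K u + ⟪K' u, v - u⟫))
    (x zstar : EuclideanSpace ℝ (Fin n))
    (hmin : ∀ y, f x + ⟪f' x, zstar - x⟫ + g zstar + (1 / ε) * D x zstar
      ≤ f x + ⟪f' x, y - x⟫ + g y + (1 / ε) * D x y)
    (Ex : ℝ)
    (hEx : Ex = f x + ⟪f' x, zstar - x⟫ + g zstar + (1 / ε) * D x zstar)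
    (θ₂ : ℝ) (hθ₂ : θ₂ = (3 / 2) * L + M / (2 * εlow)) :
    Ex - Fbar ≤ θ₂ * (Metric.infDist x S) ^ 2 := by
  -- F is continuous, so S is closed and nonempty; take the closest point u.
  have hfc : Continuous f := by
    apply continuous_iff_continuousAt.2 fun z => (hf z).continuousAt
  have hFc : Continuous F := by
    have : Continuous fun u => f u + g u := hfc.add hg
    simpa [funext hF] using this
  have hScl : IsClosed S := by
    rw [hS]
    exact isClosed_le hFc continuous_const
  have hSne : S.Nonempty := ⟨xbar, by simp [hS, hFbar]⟩
  obtain ⟨u, huS, hud⟩ := hScl.exists_infDist_eq_dist hSne x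
  have hFu : F u ≤ Fbar := by rw [hS] at huS; exact huS
  set N : ℝ := ‖u - x‖ with hN
  have hNd : Metric.infDist x S = N := by
    rw [hud, dist_eq_norm, norm_sub_rev]
  have hNnn : (0:ℝ) ≤ N := norm_nonneg _
  -- bound on the Bregman distance
  have hDb : D x u ≤ M / 2 * N ^ 2 := by
    have := descent_aux K K' M hK hKlip x u
    rw [hD]; linarith
  have hMN : (0:ℝ) ≤ M * N := le_trans (norm_nonneg _) (hKlip u x)
  have hεpos : (0:ℝ) < ε := lt_of_lt_of_le hεlow hε
  have hDε : (1 / ε) * D x u ≤ M / (2 * εlow) * N ^ 2 := by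
    rcases le_or_gt (D x u) 0 with hD0 | hD0
    · have h1 : (1 / ε) * D x u ≤ 0 :=
        mul_nonpos_of_nonneg_of_nonpos (by positivity) hD0
      have h2 : (0:ℝ) ≤ M / (2 * εlow) * N ^ 2 := by
        have h3 : (0:ℝ) ≤ M * N ^ 2 := by nlinarith [mul_nonneg hMN hNnn]
        have h4 : M / (2 * εlow) * N ^ 2 = (M * N ^ 2) / (2 * εlow) := by ring
        rw [h4]
        exact div_nonneg h3 (by positivity)
      linarith
    · have h1 : (1 / ε) * D x u ≤ (1 / εlow) * D x u := by
        apply mul_le_mul_of_nonneg_right _ hD0.le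
        exact one_div_le_one_div_of_le hεlow hε
      have h2 : (1 / εlow) * D x u ≤ (1 / εlow) * (M / 2 * N ^ 2) := by
        apply mul_le_mul_of_nonneg_left hDb (by positivity)
      have h3 : (1 / εlow) * (M / 2 * N ^ 2) = M / (2 * εlow) * N ^ 2 := by
        ring
      linarith
  -- bound on the linearized f part
  have hfb : f x + ⟪f' x, u - x⟫ ≤ f u + (3 / 2) * L * N ^ 2 := by
    have hdesc : f x ≤ f u + ⟪f' u, x - u⟫ + L / 2 * ‖x - u‖ ^ 2 :=
      descent_aux f f' L hf hflip u x
    have hcs : ⟪f' x - f' u, u - x⟫ ≤ ‖f' x - f' u‖ * ‖u - x‖ := real_inner_le_norm _ _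
    have hl : ‖f' x - f' u‖ ≤ L * ‖x - u‖ := hflip x u
    have hsplit : ⟪f' x - f' u, u - x⟫ = ⟪f' x, u - x⟫ - ⟪f' u, u - x⟫ :=
      inner_sub_left _ _ _
    have hneg : ⟪f' u, x - u⟫ = - ⟪f' u, u - x⟫ := by
      rw [show x - u = -(u - x) by abel, inner_neg_right]
    have hnrev : ‖x - u‖ = N := norm_sub_rev x u
    rw [hnrev] at hdesc hl
    nlinarith
  -- combine
  have hchain : Ex ≤ f u + g u + (3 / 2) * L * N ^ 2 + M / (2 * εlow) * N ^ 2 := by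
    have := hmin u
    rw [← hEx] at this
    linarith
  rw [hNd, hθ₂]
  have : f u + g u = F u := (hF u).symm
  nlinarith
end

section
/- Let E be a real inner product space, N ≥ 1 a natural number, a > 0, κ > 0, and set b = N²κ/a + N. Let x ∈ E, y¹,…,y^N ∈ E, and Fx, F̄, F₁,…,F_N real numbers. Suppose: (A) N·(1/N)Σ_i F_i − (N − 1)Fx − F̄ ≤ N²κ·(1/N)Σ_i ‖y^i − x‖²; and (B) Fx − F_i ≥ a‖x − y^i‖² for every i. Then (1/N)Σ_{i=1}^N F_i − F̄ ≤ ((b − 1)/b)·(Fx − F̄). -/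
/-- from the averaged error-bound estimate (A) and the sufficient decrease (B),
one gets the contraction `(1/N)Σᵢ Fᵢ - F̄ ≤ ((b-1)/b)(Fx - F̄)` with `b = N²κ/a + N`. -/
theorem stmt_9 {E : Type*} [NormedAddCommGroup E] [InnerProductSpace ℝ E]
    (N : ℕ) (hN : 1 ≤ N) (a κ : ℝ) (ha : 0 < a) (hκ : 0 < κ)
    (b : ℝ) (hb : b = N ^ 2 * κ / a + N)
    (x : E) (y : Fin N → E)
    (Fx Fbar : ℝ) (Fi : Fin N → ℝ)
    (hA : N * (((1 : ℝ) / N) * ∑ i, Fi i) - (N - 1) * Fx - Fbar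
      ≤ N ^ 2 * κ * (((1 : ℝ) / N) * ∑ i, ‖y i - x‖ ^ 2))
    (hB : ∀ i, Fx - Fi i ≥ a * ‖x - y i‖ ^ 2) :
    ((1 : ℝ) / N) * ∑ i, Fi i - Fbar ≤ ((b - 1) / b) * (Fx - Fbar) := by
  have hNpos : (0 : ℝ) < N := by exact_mod_cast Nat.lt_of_lt_of_le Nat.zero_lt_one hN
  have hN1 : (1 : ℝ) ≤ N := by exact_mod_cast hN
  have hbpos : 0 < b := by
    rw [hb]
    have : 0 < (N : ℝ) ^ 2 * κ / a := by positivity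
    linarith
  -- sum form of (B)
  have hsum : a * ∑ i, ‖y i - x‖ ^ 2 ≤ N * Fx - ∑ i, Fi i := by
    have h : ∀ i, a * ‖y i - x‖ ^ 2 ≤ Fx - Fi i := by
      intro i; rw [norm_sub_rev]; exact hB i
    calc a * ∑ i, ‖y i - x‖ ^ 2 = ∑ i, a * ‖y i - x‖ ^ 2 := by rw [Finset.mul_sum]
      _ ≤ ∑ i, (Fx - Fi i) := Finset.sum_le_sum fun i _ => h i
      _ = N * Fx - ∑ i, Fi i := by
          rw [Finset.sum_sub_distrib, Finset.sum_const, Finset.card_univ, Fintype.card_fin,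
            nsmul_eq_mul]
  set S := ∑ i, Fi i with hS
  set Q := ∑ i, ‖y i - x‖ ^ 2 with hQ
  have hQle : Q ≤ (N * Fx - S) / a := by
    rw [le_div_iff₀ ha] at *; linarith [hsum]
  have hQnn : 0 ≤ Q := Finset.sum_nonneg fun i _ => by positivity
  -- key: b * ((1/N)*S - Fbar) ≤ (b-1) * (Fx - Fbar)
  have hc : (0 : ℝ) ≤ (N : ℝ) ^ 2 * κ / N := by positivity
  have hA' : N * (((1 : ℝ) / N) * S) - (N - 1) * Fx - Fbar
      ≤ (N ^ 2 * κ / N) * Q := by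
    calc N * (((1 : ℝ) / N) * S) - (N - 1) * Fx - Fbar
        ≤ N ^ 2 * κ * (((1 : ℝ) / N) * Q) := hA
      _ = (N ^ 2 * κ / N) * Q := by ring
  have hA'' : N * (((1 : ℝ) / N) * S) - (N - 1) * Fx - Fbar
      ≤ (N ^ 2 * κ / N) * ((N * Fx - S) / a) :=
    hA'.trans (mul_le_mul_of_nonneg_left hQle hc)
  have hNS : (N : ℝ) * (((1 : ℝ) / N) * S) = S := by
    field_simp
  have hkey : b * (((1 : ℝ) / N) * S - Fbar) ≤ (b - 1) * (Fx - Fbar) := by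
    have hrw : (N ^ 2 * κ / N) * ((N * Fx - S) / a)
        = (b - N) * (Fx - ((1:ℝ)/N) * S) := by
      rw [hb]; field_simp; ring
    rw [hrw, hNS] at hA''
    have : (N : ℝ) * (((1:ℝ)/N) * S) = S := hNS
    nlinarith [hA'']
  calc ((1 : ℝ) / N) * S - Fbar = b * (((1 : ℝ) / N) * S - Fbar) / b := by
        field_simp
    _ ≤ (b - 1) * (Fx - Fbar) / b := by
        gcongr
    _ = ((b - 1) / b) * (Fx - Fbar) := by ring
end

section
/- Let N ≥ 1 be a natural number, b ≥ 1, and let F̄, Fx and F₁,…,F_N be real numbers with F̄ ≤ F_i ≤ Fx for every i and Fx − F̄ ≤ b·(1/N)Σ_{i=1}^N (Fx − F_i). Then √(Fx − F̄) − (1/N)Σ_{i=1}^N √(F_i − F̄) ≥ (1/(2√b))·√((1/N)Σ_{i=1}^N (Fx − F_i)). -/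
/-- Pointwise concavity estimate: for `0 ≤ c ≤ a`, `√c ≤ √a - (a - c)/(2√a)`. -/
lemma sqrt_aux {a c : ℝ} (hc : 0 ≤ c) (hca : c ≤ a) (ha : 0 < a) :
    Real.sqrt c ≤ Real.sqrt a - (a - c) / (2 * Real.sqrt a) := by
  have hsa : 0 < Real.sqrt a := Real.sqrt_pos.mpr ha
  have h1 : Real.sqrt a ^ 2 = a := Real.sq_sqrt ha.le
  have h2 : Real.sqrt c ^ 2 = c := Real.sq_sqrt hc
  have ht : (a - c) / (2 * Real.sqrt a) * (2 * Real.sqrt a) = a - c := by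
    field_simp
  nlinarith [sq_nonneg (Real.sqrt a - Real.sqrt c), Real.sqrt_nonneg c]

/-- the concavity-of-square-root estimate:
if `F̄ ≤ Fᵢ ≤ Fx` and `Fx - F̄ ≤ b·(1/N)Σᵢ(Fx - Fᵢ)` with `b ≥ 1`, then
`√(Fx - F̄) - (1/N)Σᵢ √(Fᵢ - F̄) ≥ (1/(2√b))·√((1/N)Σᵢ(Fx - Fᵢ))`. -/
theorem stmt_13 (N : ℕ) (hN : 1 ≤ N) (b : ℝ) (hb : 1 ≤ b)
    (Fbar Fx : ℝ) (Fi : Fin N → ℝ)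
    (hle : ∀ i, Fbar ≤ Fi i ∧ Fi i ≤ Fx)
    (heb : Fx - Fbar ≤ b * (((1 : ℝ) / N) * ∑ i, (Fx - Fi i))) :
    Real.sqrt (Fx - Fbar) - ((1 : ℝ) / N) * ∑ i, Real.sqrt (Fi i - Fbar)
      ≥ (1 / (2 * Real.sqrt b)) * Real.sqrt (((1 : ℝ) / N) * ∑ i, (Fx - Fi i)) := by
  have hNpos : (0 : ℝ) < N := by exact_mod_cast hN
  set S : ℝ := ((1 : ℝ) / N) * ∑ i, (Fx - Fi i) with hSdef
  have hS0 : 0 ≤ S := by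
    apply mul_nonneg (by positivity)
    exact Finset.sum_nonneg fun i _ => sub_nonneg.mpr (hle i).2
  have hA0 : 0 ≤ Fx - Fbar := by
    have h := hle ⟨0, hN⟩
    linarith [h.1, h.2]
  rcases eq_or_lt_of_le hA0 with h0 | hA
  · -- degenerate case Fx = Fbar
    have hFi : ∀ i, Fi i - Fbar = 0 := fun i => by
      have h := hle i; linarith [h.1, h.2]
    have hFx : ∀ i, Fx - Fi i = 0 := fun i => by
      have h := hle i; linarith [h.1, h.2]
    have hsum1 : (∑ i, Real.sqrt (Fi i - Fbar)) = 0 := by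
      apply Finset.sum_eq_zero; intro i _; rw [hFi i, Real.sqrt_zero]
    have hsum2 : (∑ i, (Fx - Fi i)) = 0 := Finset.sum_eq_zero fun i _ => hFx i
    have hS : S = 0 := by rw [hSdef, hsum2]; ring
    rw [hsum1, hS, ← h0]
    simp
  · -- main case
    have hbpos : (0 : ℝ) < b := by linarith
    have hSpos : 0 < S := by nlinarith
    have hsa : 0 < Real.sqrt (Fx - Fbar) := Real.sqrt_pos.mpr hA
    have key : ∀ i : Fin N, Real.sqrt (Fi i - Fbar)
        ≤ Real.sqrt (Fx - Fbar) - (Fx - Fi i) / (2 * Real.sqrt (Fx - Fbar)) := by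
      intro i
      have h := hle i
      have := sqrt_aux (a := Fx - Fbar) (c := Fi i - Fbar)
        (by linarith [h.1]) (by linarith [h.2]) hA
      have heq : Fx - Fbar - (Fi i - Fbar) = Fx - Fi i := by ring
      rwa [heq] at this
    have hsum : (∑ i, Real.sqrt (Fi i - Fbar))
        ≤ ∑ i : Fin N, (Real.sqrt (Fx - Fbar) - (Fx - Fi i) / (2 * Real.sqrt (Fx - Fbar))) :=
      Finset.sum_le_sum fun i _ => key i
    have hsum2 : (∑ i : Fin N, (Real.sqrt (Fx - Fbar)
        - (Fx - Fi i) / (2 * Real.sqrt (Fx - Fbar))))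
        = N * Real.sqrt (Fx - Fbar) - (∑ i, (Fx - Fi i)) / (2 * Real.sqrt (Fx - Fbar)) := by
      rw [Finset.sum_sub_distrib, Finset.sum_const, Finset.card_univ, Fintype.card_fin,
        ← Finset.sum_div]
      ring
    -- so LHS ≥ S / (2 √(Fx - Fbar))
    have hLHS : Real.sqrt (Fx - Fbar) - ((1 : ℝ) / N) * ∑ i, Real.sqrt (Fi i - Fbar)
        ≥ S / (2 * Real.sqrt (Fx - Fbar)) := by
      have h1 : ((1 : ℝ) / N) * ∑ i, Real.sqrt (Fi i - Fbar)
          ≤ ((1 : ℝ) / N) * (N * Real.sqrt (Fx - Fbar)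
            - (∑ i, (Fx - Fi i)) / (2 * Real.sqrt (Fx - Fbar))) := by
        apply mul_le_mul_of_nonneg_left _ (by positivity)
        rw [← hsum2]; exact hsum
      have h2 : ((1 : ℝ) / N) * (N * Real.sqrt (Fx - Fbar)
            - (∑ i, (Fx - Fi i)) / (2 * Real.sqrt (Fx - Fbar)))
          = Real.sqrt (Fx - Fbar) - S / (2 * Real.sqrt (Fx - Fbar)) := by
        rw [hSdef]; field_simp
      rw [h2] at h1
      linarith
    -- now  S / (2 √A) ≥ √S / (2 √b)  since √A ≤ √b √S
    have hsb : 0 < Real.sqrt b := Real.sqrt_pos.mpr hbpos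
    have hsS : 0 < Real.sqrt S := Real.sqrt_pos.mpr hSpos
    have hAle : Real.sqrt (Fx - Fbar) ≤ Real.sqrt b * Real.sqrt S := by
      rw [← Real.sqrt_mul hbpos.le]
      exact Real.sqrt_le_sqrt heb
    have hfinal : S / (2 * Real.sqrt (Fx - Fbar))
        ≥ (1 / (2 * Real.sqrt b)) * Real.sqrt S := by
      have h1 : (1 / (2 * Real.sqrt b)) * Real.sqrt S = Real.sqrt S / (2 * Real.sqrt b) := by
        ring
      rw [ge_iff_le, h1, div_le_div_iff₀ (by positivity) (by positivity)]
      have hSS : Real.sqrt S * Real.sqrt S = S := Real.mul_self_sqrt hSpos.le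
      nlinarith [mul_le_mul_of_nonneg_left hAle hsS.le]
    calc Real.sqrt (Fx - Fbar) - ((1 : ℝ) / N) * ∑ i, Real.sqrt (Fi i - Fbar)
        ≥ S / (2 * Real.sqrt (Fx - Fbar)) := hLHS
      _ ≥ (1 / (2 * Real.sqrt b)) * Real.sqrt S := hfinal
end

section
/- Let E be a real inner product space, N ≥ 1 a natural number, a > 0, b ≥ 1. Let x, y¹,…,y^N ∈ E and let F̄, Fx, F₁,…,F_N be real numbers with F̄ ≤ F_i ≤ Fx for every i, a‖x − y^i‖² ≤ Fx − F_i for every i, and Fx − F̄ ≤ b·(1/N)Σ_{j=1}^N (Fx − F_j). Then for every i: 2‖x − y^i‖ ≤ (√b/√a)·√((1/N)Σ_{j=1}^N (Fx − F_j)) + (2/√a)·(√(Fx − F̄) − √(F_i − F̄)). -/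
/-- step-length estimate (4.15)-(4.16):
`2‖x - yⁱ‖ ≤ (√b/√a)·√((1/N)Σⱼ(Fx - Fⱼ)) + (2/√a)(√(Fx - F̄) - √(Fᵢ - F̄))`. -/
theorem stmt_14 {E : Type*} [NormedAddCommGroup E] [InnerProductSpace ℝ E]
    (N : ℕ) (hN : 1 ≤ N) (a b : ℝ) (ha : 0 < a) (hb : 1 ≤ b)
    (x : E) (y : Fin N → E)
    (Fbar Fx : ℝ) (Fi : Fin N → ℝ)
    (hle : ∀ i, Fbar ≤ Fi i ∧ Fi i ≤ Fx)
    (hdec : ∀ i, a * ‖x - y i‖ ^ 2 ≤ Fx - Fi i)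
    (heb : Fx - Fbar ≤ b * (((1 : ℝ) / N) * ∑ j, (Fx - Fi j))) :
    ∀ i, 2 * ‖x - y i‖
      ≤ (Real.sqrt b / Real.sqrt a) * Real.sqrt (((1 : ℝ) / N) * ∑ j, (Fx - Fi j))
        + (2 / Real.sqrt a) * (Real.sqrt (Fx - Fbar) - Real.sqrt (Fi i - Fbar)) := by
  intro i
  have hsa : 0 < Real.sqrt a := Real.sqrt_pos.2 ha
  set u := Fx - Fbar with hu
  set v := Fi i - Fbar with hv
  have hv0 : 0 ≤ v := by have := (hle i).1; simp only [hv]; linarith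
  have huv : v ≤ u := by have := (hle i).2; simp only [hu, hv]; linarith
  have hu0 : 0 ≤ u := le_trans hv0 huv
  have huv' : Fx - Fi i = u - v := by simp only [hu, hv]; ring
  set S := ((1:ℝ)/N) * ∑ j, (Fx - Fi j) with hSdef
  have hS0 : 0 ≤ S := by
    apply mul_nonneg (by positivity)
    exact Finset.sum_nonneg fun j _ => by linarith [(hle j).2]
  set p := Real.sqrt (u - v) with hp
  set q := Real.sqrt v with hq
  set r := Real.sqrt u with hr
  have hp0 : 0 ≤ p := Real.sqrt_nonneg _
  have hq0 : 0 ≤ q := Real.sqrt_nonneg _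
  have hr0 : 0 ≤ r := Real.sqrt_nonneg _
  have hpqr : p ^ 2 + q ^ 2 = r ^ 2 := by
    rw [hp, hq, hr, Real.sq_sqrt (by linarith), Real.sq_sqrt hv0, Real.sq_sqrt hu0]; ring
  have h3 : 2 * (p + q) ≤ 3 * r := by
    nlinarith [sq_nonneg (p - q), mul_nonneg hp0 hq0, sq_nonneg (2*p + 2*q - 3*r),
      sq_nonneg (2*p + 2*q + 3*r)]
  have h4 : r ≤ Real.sqrt b * Real.sqrt S := by
    rw [← Real.sqrt_mul (by linarith : (0:ℝ) ≤ b)]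
    exact Real.sqrt_le_sqrt (by linarith)
  have hkey : 2 * p ≤ Real.sqrt b * Real.sqrt S + 2 * (r - q) := by linarith
  have h1 : ‖x - y i‖ ≤ p / Real.sqrt a := by
    have h := hdec i
    rw [huv'] at h
    have h2 : ‖x - y i‖ ^ 2 ≤ (u - v) / a := by rw [le_div_iff₀ ha]; nlinarith
    calc ‖x - y i‖ = Real.sqrt (‖x - y i‖ ^ 2) := (Real.sqrt_sq (norm_nonneg _)).symm
      _ ≤ Real.sqrt ((u - v) / a) := Real.sqrt_le_sqrt h2
      _ = p / Real.sqrt a := by rw [hp, Real.sqrt_div (by linarith : (0:ℝ) ≤ u - v)]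
  calc 2 * ‖x - y i‖ ≤ 2 * (p / Real.sqrt a) := by linarith
    _ = 2 * p / Real.sqrt a := by ring
    _ ≤ (Real.sqrt b * Real.sqrt S + 2 * (r - q)) / Real.sqrt a := by gcongr
    _ = Real.sqrt b / Real.sqrt a * Real.sqrt S + 2 / Real.sqrt a * (r - q) := by ring
end

section
/- Let E be a real inner product space, F : E → ℝ, x̄ ∈ E with F̄ = F(x̄), and let a > 0, b ≥ 1, η > 0, ν > 0, d ≥ 0, and 𝒩 ≥ (ν/a)/(η/2)². Let (xᵏ) be a sequence in E and for each k let y^{k,1},…,y^{k,N} ∈ E with x^{k+1} ∈ {y^{k,1},…,y^{k,N}}. Assume for all k and all i: (H1) a‖xᵏ − y^{k,i}‖² ≤ F(xᵏ) − F(y^{k,i}); (H2) F(y^{k,i}) ≥ F̄; (H3) whenever ‖xᵏ − x̄‖ ≤ η/2 and F̄ ≤ F(xᵏ) < F̄ + ν/𝒩, one has F(xᵏ) − F̄ ≤ b·(1/N)Σ_{j=1}^N (F(xᵏ) − F(y^{k,j})); (H4) Σ_{k=0}^∞ √((1/N)Σ_{j=1}^N (F(xᵏ) − F(y^{k,j})))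 ≤ d; (H5) F̄ ≤ F(x⁰) < F̄ + ν/𝒩 and ‖x⁰ − x̄‖ + (d√b)/(2√a) + (1/√a)·√(F(x⁰) − F̄) < η/2. Then: (i) for every k, ‖xᵏ − x̄‖ ≤ η/2 and F̄ ≤ F(xᵏ) < F̄ + ν/𝒩; (ii) Σ_{k=0}^∞ ‖xᵏ − x^{k+1}‖ ≤ (d√b)/(2√a) + (1/√a)·√(F(x⁰) − F̄), and hence the sequence (xᵏ) converges. -/
open Filter

private lemma aux_sqrt (p q : ℝ) (hq : 0 ≤ q) (hpq : q ≤ p) :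
    Real.sqrt (p ^ 2 - q ^ 2) ≤ p / 2 + (p - q) := by
  have h0 : 0 ≤ p / 2 + (p - q) := by linarith
  have h1 : p ^ 2 - q ^ 2 ≤ (p / 2 + (p - q)) ^ 2 := by
    nlinarith [sq_nonneg (5 * p - 6 * q), sq_nonneg q]
  calc Real.sqrt (p ^ 2 - q ^ 2) ≤ Real.sqrt ((p / 2 + (p - q)) ^ 2) := Real.sqrt_le_sqrt h1
    _ = p / 2 + (p - q) := Real.sqrt_sq h0

/-- per-realization finite-length property (Proposition 4.1):
under sufficient decrease (H1), Property A (H2), the level-set error-bound consequence (H3),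
the summability bound (H4) and the initialization condition (H5), all iterates stay in the
trapping region and the sequence has finite length, hence converges. -/
theorem stmt_15 {E : Type*} [NormedAddCommGroup E] [InnerProductSpace ℝ E]
    [CompleteSpace E] {N : ℕ}
    (F : E → ℝ) (xbar : E) (Fbar : ℝ) (hFbar : Fbar = F xbar)
    (a b η ν d 𝒩 : ℝ) (ha : 0 < a) (hb : 1 ≤ b) (hη : 0 < η) (hν : 0 < ν)
    (hd : 0 ≤ d) (h𝒩 : 𝒩 ≥ (ν / a) / (η / 2) ^ 2)
    (x : ℕ → E) (y : ℕ → Fin N → E)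
    (hstep : ∀ k, ∃ i : Fin N, x (k + 1) = y k i)
    (H1 : ∀ k i, a * ‖x k - y k i‖ ^ 2 ≤ F (x k) - F (y k i))
    (H2 : ∀ k i, F (y k i) ≥ Fbar)
    (H3 : ∀ k, ‖x k - xbar‖ ≤ η / 2 → Fbar ≤ F (x k) → F (x k) < Fbar + ν / 𝒩 →
      F (x k) - Fbar ≤ b * (((1 : ℝ) / N) * ∑ j, (F (x k) - F (y k j))))
    (H4 : ∀ K : ℕ, ∑ k ∈ Finset.range K,
      Real.sqrt (((1 : ℝ) / N) * ∑ j, (F (x k) - F (y k j))) ≤ d)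
    (H5a : Fbar ≤ F (x 0)) (H5b : F (x 0) < Fbar + ν / 𝒩)
    (H5c : ‖x 0 - xbar‖ + d * Real.sqrt b / (2 * Real.sqrt a)
      + (1 / Real.sqrt a) * Real.sqrt (F (x 0) - Fbar) < η / 2) :
    (∀ k, ‖x k - xbar‖ ≤ η / 2 ∧ Fbar ≤ F (x k) ∧ F (x k) < Fbar + ν / 𝒩)
    ∧ (∀ K : ℕ, ∑ k ∈ Finset.range K, ‖x k - x (k + 1)‖
        ≤ d * Real.sqrt b / (2 * Real.sqrt a)
          + (1 / Real.sqrt a) * Real.sqrt (F (x 0) - Fbar))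
    ∧ (∃ xlim : E, Tendsto x atTop (nhds xlim)) := by
  have hb0 : (0 : ℝ) ≤ b := le_trans zero_le_one hb
  have hsa : 0 < Real.sqrt a := Real.sqrt_pos.mpr ha
  -- abbreviations (plain functions, kept definitionally transparent)
  set G : ℕ → ℝ := fun k => F (x k) - Fbar with hGdef
  set S : ℕ → ℝ := fun k => (1 : ℝ) / N * ∑ j, (F (x k) - F (y k j)) with hSdef
  have hS0 : ∀ k, 0 ≤ S k := by
    intro k
    simp only [hSdef]
    apply mul_nonneg (by positivity)
    apply Finset.sum_nonneg
    intro j _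
    have h := H1 k j
    nlinarith [sq_nonneg ‖x k - y k j‖]
  have hdec : ∀ k, a * ‖x k - x (k + 1)‖ ^ 2 ≤ G k - G (k + 1) := by
    intro k
    obtain ⟨i, hi⟩ := hstep k
    simp only [hGdef, hi]
    have := H1 k i
    linarith
  have hGmono : ∀ k, G (k + 1) ≤ G k := by
    intro k
    have h := hdec k
    nlinarith [sq_nonneg ‖x k - x (k + 1)‖]
  have hG0 : ∀ k, 0 ≤ G k := by
    intro k
    cases k with
    | zero => simp only [hGdef]; linarith
    | succ n =>
      obtain ⟨i, hi⟩ := hstep n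
      simp only [hGdef, hi]
      have := H2 n i
      linarith
  have hnormstep : ∀ k, ‖x k - x (k + 1)‖ ≤ (1 / Real.sqrt a) * Real.sqrt (G k - G (k + 1)) := by
    intro k
    have h1 : Real.sqrt a * ‖x k - x (k + 1)‖ = Real.sqrt (a * ‖x k - x (k + 1)‖ ^ 2) := by
      rw [Real.sqrt_mul ha.le, Real.sqrt_sq (norm_nonneg _)]
    have h2 : Real.sqrt a * ‖x k - x (k + 1)‖ ≤ Real.sqrt (G k - G (k + 1)) := by
      rw [h1]; exact Real.sqrt_le_sqrt (hdec k)
    calc ‖x k - x (k + 1)‖ = (1 / Real.sqrt a) * (Real.sqrt a * ‖x k - x (k + 1)‖) := by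
          field_simp
      _ ≤ (1 / Real.sqrt a) * Real.sqrt (G k - G (k + 1)) := by
          apply mul_le_mul_of_nonneg_left h2 (by positivity)
  have hSd : ∀ K, ∑ j ∈ Finset.range K, Real.sqrt (S j) ≤ d := by
    intro K
    have := H4 K
    simpa only [hSdef] using this
  have main : ∀ k, (‖x k - xbar‖ ≤ η / 2 ∧ Fbar ≤ F (x k) ∧ F (x k) < Fbar + ν / 𝒩)
      ∧ (∑ j ∈ Finset.range k, Real.sqrt (G j - G (j + 1))) + Real.sqrt (G k)
        ≤ Real.sqrt b / 2 * (∑ j ∈ Finset.range k, Real.sqrt (S j)) + Real.sqrt (G 0) := by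
    intro k
    induction k with
    | zero =>
      constructor
      · refine ⟨?_, H5a, H5b⟩
        have h1 : 0 ≤ d * Real.sqrt b / (2 * Real.sqrt a) := by positivity
        have h2 : 0 ≤ (1 / Real.sqrt a) * Real.sqrt (F (x 0) - Fbar) := by positivity
        linarith
      · simp
    | succ k ih =>
      obtain ⟨⟨hnk, hlk, huk⟩, hsum⟩ := ih
      have h3 := H3 k hnk hlk huk
      have hGb : G k ≤ b * S k := by simp only [hGdef, hSdef]; exact h3
      have hp : Real.sqrt (G k) ≤ Real.sqrt b * Real.sqrt (S k) := by
        rw [← Real.sqrt_mul hb0]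
        exact Real.sqrt_le_sqrt hGb
      have hper : Real.sqrt (G k - G (k + 1)) + Real.sqrt (G (k + 1))
          ≤ Real.sqrt b / 2 * Real.sqrt (S k) + Real.sqrt (G k) := by
        have hq := Real.sqrt_nonneg (G (k + 1))
        have hpq : Real.sqrt (G (k + 1)) ≤ Real.sqrt (G k) := Real.sqrt_le_sqrt (hGmono k)
        have haux := aux_sqrt (Real.sqrt (G k)) (Real.sqrt (G (k + 1))) hq hpq
        rw [Real.sq_sqrt (hG0 k), Real.sq_sqrt (hG0 (k + 1))] at haux
        linarith
      have hsum' : (∑ j ∈ Finset.range (k + 1), Real.sqrt (G j - G (j + 1)))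
          + Real.sqrt (G (k + 1))
          ≤ Real.sqrt b / 2 * (∑ j ∈ Finset.range (k + 1), Real.sqrt (S j)) + Real.sqrt (G 0) := by
        rw [Finset.sum_range_succ, Finset.sum_range_succ, mul_add]
        linarith
      refine ⟨⟨?_, ?_, ?_⟩, hsum'⟩
      · -- norm bound
        have hdist : dist (x 0) (x (k + 1)) ≤ ∑ i ∈ Finset.range (k + 1), dist (x i) (x (i + 1)) :=
          dist_le_range_sum_dist x (k + 1)
        have hsum2 : ∑ i ∈ Finset.range (k + 1), dist (x i) (x (i + 1))
            ≤ (1 / Real.sqrt a) * ∑ i ∈ Finset.range (k + 1), Real.sqrt (G i - G (i + 1)) := by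
          rw [Finset.mul_sum]
          apply Finset.sum_le_sum
          intro i _
          rw [dist_eq_norm]
          exact hnormstep i
        have hsum3 : ∑ i ∈ Finset.range (k + 1), Real.sqrt (G i - G (i + 1))
            ≤ Real.sqrt b / 2 * d + Real.sqrt (G 0) := by
          have h1 : Real.sqrt b / 2 * (∑ j ∈ Finset.range (k + 1), Real.sqrt (S j))
              ≤ Real.sqrt b / 2 * d :=
            mul_le_mul_of_nonneg_left (hSd (k + 1)) (by positivity)
          have h2 := Real.sqrt_nonneg (G (k + 1))
          linarith
        have htri : ‖x (k + 1) - xbar‖ ≤ dist (x 0) (x (k + 1)) + ‖x 0 - xbar‖ := by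
          rw [← dist_eq_norm, ← dist_eq_norm, dist_comm (x 0)]
          exact dist_triangle _ _ _
        have hmul : (1 / Real.sqrt a) * (∑ i ∈ Finset.range (k + 1), Real.sqrt (G i - G (i + 1)))
            ≤ (1 / Real.sqrt a) * (Real.sqrt b / 2 * d + Real.sqrt (G 0)) :=
          mul_le_mul_of_nonneg_left hsum3 (by positivity)
        have heq : (1 / Real.sqrt a) * (Real.sqrt b / 2 * d + Real.sqrt (G 0))
            = d * Real.sqrt b / (2 * Real.sqrt a)
              + (1 / Real.sqrt a) * Real.sqrt (F (x 0) - Fbar) := by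
          have hg : Real.sqrt (G 0) = Real.sqrt (F (x 0) - Fbar) := by simp only [hGdef]
          rw [hg]
          field_simp
        linarith
      · -- lower bound on F
        have := hG0 (k + 1)
        simp only [hGdef] at this
        linarith
      · -- upper bound on F
        have := hGmono k
        simp only [hGdef] at this
        linarith
  have hii : ∀ K : ℕ, ∑ k ∈ Finset.range K, ‖x k - x (k + 1)‖
      ≤ d * Real.sqrt b / (2 * Real.sqrt a) + (1 / Real.sqrt a) * Real.sqrt (F (x 0) - Fbar) := by
    intro K
    have hsum2 : ∑ i ∈ Finset.range K, ‖x i - x (i + 1)‖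
        ≤ (1 / Real.sqrt a) * ∑ i ∈ Finset.range K, Real.sqrt (G i - G (i + 1)) := by
      rw [Finset.mul_sum]
      exact Finset.sum_le_sum fun i _ => hnormstep i
    have hsum3 : ∑ i ∈ Finset.range K, Real.sqrt (G i - G (i + 1))
        ≤ Real.sqrt b / 2 * d + Real.sqrt (G 0) := by
      have h1 : Real.sqrt b / 2 * (∑ j ∈ Finset.range K, Real.sqrt (S j))
          ≤ Real.sqrt b / 2 * d :=
        mul_le_mul_of_nonneg_left (hSd K) (by positivity)
      have h2 := Real.sqrt_nonneg (G K)
      have := (main K).2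
      linarith
    have hmul : (1 / Real.sqrt a) * (∑ i ∈ Finset.range K, Real.sqrt (G i - G (i + 1)))
        ≤ (1 / Real.sqrt a) * (Real.sqrt b / 2 * d + Real.sqrt (G 0)) :=
      mul_le_mul_of_nonneg_left hsum3 (by positivity)
    have heq : (1 / Real.sqrt a) * (Real.sqrt b / 2 * d + Real.sqrt (G 0))
        = d * Real.sqrt b / (2 * Real.sqrt a)
          + (1 / Real.sqrt a) * Real.sqrt (F (x 0) - Fbar) := by
      have hg : Real.sqrt (G 0) = Real.sqrt (F (x 0) - Fbar) := by simp only [hGdef]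
      rw [hg]
      field_simp
    linarith
  refine ⟨fun k => (main k).1, hii, ?_⟩
  have hsummable : Summable (fun k => dist (x k) (x (k + 1))) := by
    apply summable_of_sum_range_le (c := d * Real.sqrt b / (2 * Real.sqrt a)
      + (1 / Real.sqrt a) * Real.sqrt (F (x 0) - Fbar)) (fun n => dist_nonneg)
    intro K
    calc ∑ i ∈ Finset.range K, dist (x i) (x (i + 1))
        = ∑ i ∈ Finset.range K, ‖x i - x (i + 1)‖ := by
          exact Finset.sum_congr rfl fun i _ => dist_eq_norm _ _
      _ ≤ _ := hii K
  exact cauchySeq_tendsto_of_complete (cauchySeq_of_summable_dist hsummable)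
end

section
/- Let E = Π_{i=1}^N E_i be a product of Euclidean spaces with norm ‖x‖² = Σ_i ‖x_i‖², let F : E → ℝ with inf F = F* > −∞, and let a > 0. Let Ω = ℕ → Fin N be equipped with the product probability measure μ of uniform measures on Fin N. For each k let T^k_1,…,T^k_N : E → E and T^k : E → E be maps satisfying, for every x ∈ E: F(T^k_i(x)) ≤ F(x) − a‖x − T^k_i(x)‖² for each i, and (1/N)Σ_{i=1}^N ‖x − T^k_i(x)‖² = (1/N)‖x − T^k(x)‖². Define the process X : ℕ → Ω → E by X 0 ω = x⁰ and X (k+1) ω = T^k_{ω(k)}(X k ω). Then Σ_{k=0}^∞ ∫_Ω ‖X k ω − T^k(X k ω)‖² dμ(ω) ≤ (N/a)(F(x⁰) − F*), and consequently for μ-almost every ω, ‖X k ω − T^k(X k ω)‖ → 0 as k → ∞. -/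
open Filter MeasureTheory
open ProbabilityTheory
open scoped ENNReal

variable {N : ℕ}

/-- extend a finite tuple by a default value -/
def extC (hN : 0 < N) (k : ℕ) (v : Fin k → Fin N) : ℕ → Fin N :=
  fun j => if h : j < k then v ⟨j, h⟩ else ⟨0, hN⟩

lemma aux_measSet (k : ℕ) (v : Fin k → Fin N) :
    MeasurableSet {ω : ℕ → Fin N | ∀ j : Fin k, ω j = v j} := by
  have : {ω : ℕ → Fin N | ∀ j : Fin k, ω j = v j}
      = ⋂ j : Fin k, (fun ω : ℕ → Fin N => ω (j : ℕ)) ⁻¹' {v j} := by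
    ext ω; simp [Set.mem_iInter]
  rw [this]
  exact MeasurableSet.iInter fun j => (measurable_pi_apply _) (measurableSet_singleton _)

lemma aux_cyl (hN : 0 < N) (μ : Measure ((k : ℕ) → Fin N)) [IsProbabilityMeasure μ]
    (hindep : iIndepFun (m := fun _ : ℕ => (inferInstance : MeasurableSpace (Fin N)))
      (fun k ω => ω k) μ)
    (hunif : ∀ (k : ℕ) (s : Fin N), μ {ω | ω k = s} = 1 / N)
    (k : ℕ) (v : Fin k → Fin N) :
    μ {ω | ∀ j : Fin k, ω j = v j} = ((N : ℝ≥0∞))⁻¹ ^ k := by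
  have h := hindep.measure_inter_preimage_eq_mul (Finset.range k)
      (sets := fun j => {extC hN k v j}) (fun i _ => measurableSet_singleton _)
  have hset : (⋂ j ∈ Finset.range k, (fun ω : ℕ → Fin N => ω j) ⁻¹' {extC hN k v j})
      = {ω : ℕ → Fin N | ∀ j : Fin k, ω j = v j} := by
    ext ω
    simp only [Set.mem_iInter, Finset.mem_range, Set.mem_preimage, Set.mem_singleton_iff,
      Set.mem_setOf_eq]
    constructor
    · intro h j
      have := h j j.isLt
      simpa [extC, j.isLt] using this
    · intro h j hj
      simpa [extC, hj] using h ⟨j, hj⟩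
  rw [hset] at h
  rw [h]
  have hterm : ∀ j ∈ Finset.range k,
      μ ((fun ω : ℕ → Fin N => ω j) ⁻¹' {extC hN k v j}) = (N : ℝ≥0∞)⁻¹ := by
    intro j _
    have : (fun ω : ℕ → Fin N => ω j) ⁻¹' {extC hN k v j} = {ω | ω j = extC hN k v j} := rfl
    rw [this, hunif j _, one_div]
  rw [Finset.prod_congr rfl hterm, Finset.prod_const, Finset.card_range]

lemma aux_rep (hN : 0 < N) (k : ℕ) (G : (ℕ → Fin N) → ℝ)
    (hG : ∀ ω ω', (∀ j, j < k → ω j = ω' j) → G ω = G ω') (ω : ℕ → Fin N) :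
    G ω = ∑ v : Fin k → Fin N,
      Set.indicator {ω' : ℕ → Fin N | ∀ j : Fin k, ω' j = v j}
        (fun _ => G (extC hN k v)) ω := by
  classical
  rw [Finset.sum_eq_single (fun j : Fin k => ω j)]
  · rw [Set.indicator_of_mem (by intro j; rfl)]
    exact hG ω _ (fun j hj => by simp [extC, hj])
  · intro v _ hv
    apply Set.indicator_of_notMem
    intro hmem
    exact hv (funext fun j => (hmem j).symm)
  · intro h; exact absurd (Finset.mem_univ _) h

lemma aux_int (hN : 0 < N) (μ : Measure ((k : ℕ) → Fin N)) [IsProbabilityMeasure μ]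
    (hindep : iIndepFun (m := fun _ : ℕ => (inferInstance : MeasurableSpace (Fin N)))
      (fun k ω => ω k) μ)
    (hunif : ∀ (k : ℕ) (s : Fin N), μ {ω | ω k = s} = 1 / N)
    (k : ℕ) (G : (ℕ → Fin N) → ℝ)
    (hG : ∀ ω ω', (∀ j, j < k → ω j = ω' j) → G ω = G ω') :
    Measurable G ∧ Integrable G μ ∧
      ∫ ω, G ω ∂μ = ∑ v : Fin k → Fin N, ((N : ℝ)⁻¹) ^ k * G (extC hN k v) := by
  classical
  have hGeq : G = fun ω => ∑ v : Fin k → Fin N,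
      Set.indicator {ω' : ℕ → Fin N | ∀ j : Fin k, ω' j = v j}
        (fun _ => G (extC hN k v)) ω := funext (aux_rep hN k G hG)
  have hmeas : Measurable G := by
    rw [hGeq]
    exact Finset.measurable_sum _ fun v _ =>
      (measurable_const).indicator (aux_measSet k v)
  have hint : Integrable G μ := by
    rw [hGeq]
    exact integrable_finset_sum _ fun v _ =>
      (integrable_const _).indicator (aux_measSet k v)
  refine ⟨hmeas, hint, ?_⟩
  conv_lhs => rw [hGeq]
  rw [integral_finset_sum _ fun v _ =>
      (integrable_const _).indicator (aux_measSet k v)]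
  refine Finset.sum_congr rfl fun v _ => ?_
  rw [integral_indicator_const _ (aux_measSet k v), measureReal_def,
    aux_cyl hN μ hindep hunif k v, ENNReal.toReal_pow, ENNReal.toReal_inv,
    ENNReal.toReal_natCast, smul_eq_mul]


/-- almost-sure vanishing of the full proximal residual along the VBSCD
process. `Ω = ℕ → Fin N` carries the product of uniform measures on `Fin N`,
characterized as a probability measure whose coordinate maps are independent and
uniformly distributed. -/
theorem stmt_16 {N : ℕ} (hN : 0 < N) (E : Fin N → Type*)
    [∀ i, NormedAddCommGroup (E i)] [∀ i, InnerProductSpace ℝ (E i)]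
    [∀ i, FiniteDimensional ℝ (E i)]
    (F : PiLp 2 E → ℝ) (Fstar : ℝ) (hFstar : IsGLB (Set.range F) Fstar)
    (a : ℝ) (ha : 0 < a)
    (μ : Measure ((k : ℕ) → Fin N)) [IsProbabilityMeasure μ]
    (hindep : ProbabilityTheory.iIndepFun (m := fun _ : ℕ => (inferInstance : MeasurableSpace (Fin N)))
      (fun k ω => ω k) μ)
    (hunif : ∀ (k : ℕ) (s : Fin N), μ {ω | ω k = s} = 1 / N)
    (Ti : ℕ → Fin N → PiLp 2 E → PiLp 2 E) (T : ℕ → PiLp 2 E → PiLp 2 E)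
    (hdec : ∀ k i x, F (Ti k i x) ≤ F x - a * ‖x - Ti k i x‖ ^ 2)
    (havg : ∀ k x, ((1 : ℝ) / N) * ∑ i, ‖x - Ti k i x‖ ^ 2 = ((1 : ℝ) / N) * ‖x - T k x‖ ^ 2)
    (x0 : PiLp 2 E)
    (X : ℕ → ((k : ℕ) → Fin N) → PiLp 2 E)
    (hX0 : ∀ ω, X 0 ω = x0)
    (hXsucc : ∀ k ω, X (k + 1) ω = Ti k (ω k) (X k ω)) :
    (∀ K₀ : ℕ, ∑ k ∈ Finset.range K₀, ∫ ω, ‖X k ω - T k (X k ω)‖ ^ 2 ∂μ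
      ≤ (N / a) * (F x0 - Fstar))
    ∧ (∀ᵐ ω ∂μ, Tendsto (fun k => ‖X k ω - T k (X k ω)‖) atTop (nhds 0)) := by
  classical
  have hNR : (0 : ℝ) < N := Nat.cast_pos.mpr hN
  set g : ℕ → (ℕ → Fin N) → ℝ := fun k ω => ‖X k ω - T k (X k ω)‖ ^ 2 with hgdef
  set f : ℕ → (ℕ → Fin N) → ℝ := fun k ω => ‖X k ω - Ti k (ω k) (X k ω)‖ ^ 2 with hfdef
  -- X k depends only on the first k coordinates
  have hXdep : ∀ k (ω ω' : ℕ → Fin N), (∀ j, j < k → ω j = ω' j) → X k ω = X k ω' := by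
    intro k
    induction k with
    | zero => intro ω ω' _; rw [hX0, hX0]
    | succ k ih =>
        intro ω ω' h
        rw [hXsucc, hXsucc, h k (Nat.lt_succ_self k),
          ih ω ω' (fun j hj => h j (hj.trans (Nat.lt_succ_self k)))]
  have hgdep : ∀ k (ω ω' : ℕ → Fin N), (∀ j, j < k → ω j = ω' j) → g k ω = g k ω' := by
    intro k ω ω' h; simp only [hgdef]; rw [hXdep k ω ω' h]
  have hfdep : ∀ k (ω ω' : ℕ → Fin N), (∀ j, j < k + 1 → ω j = ω' j) → f k ω = f k ω' := by
    intro k ω ω' h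
    simp only [hfdef]
    rw [hXdep k ω ω' (fun j hj => h j (hj.trans (Nat.lt_succ_self k))),
      h k (Nat.lt_succ_self k)]
  -- cancel the 1/N in havg
  have hsum_i : ∀ k x, ∑ i, ‖x - Ti k i x‖ ^ 2 = ‖x - T k x‖ ^ 2 := by
    intro k x
    have := havg k x
    have hne : (1 : ℝ) / N ≠ 0 := one_div_ne_zero hNR.ne'
    exact mul_left_cancel₀ hne this
  obtain hg_all := fun k => aux_int hN μ hindep hunif k (g k) (hgdep k)
  obtain hf_all := fun k => aux_int hN μ hindep hunif (k + 1) (f k) (hfdep k)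
  have hgmeas : ∀ k, Measurable (g k) := fun k => (hg_all k).1
  have hgint : ∀ k, Integrable (g k) μ := fun k => (hg_all k).2.1
  have hfint : ∀ k, Integrable (f k) μ := fun k => (hf_all k).2.1
  -- key identity : ∫ g k = N * ∫ f k
  have hkey : ∀ k, ∫ ω, g k ω ∂μ = N * ∫ ω, f k ω ∂μ := by
    intro k
    rw [(hg_all k).2.2, (hf_all k).2.2]
    -- reindex the (k+1)-tuples as (k-tuple, last entry)
    rw [← Fintype.sum_equiv
      (⟨fun p => Fin.snoc p.1 p.2, fun w => (Fin.init w, w (Fin.last k)),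
        fun p => by simp, fun w => by simp⟩ :
        ((Fin k → Fin N) × Fin N) ≃ (Fin (k + 1) → Fin N))
      (fun p => ((N : ℝ)⁻¹) ^ (k + 1) * f k (extC hN (k + 1) (Fin.snoc p.1 p.2)))
      (fun w => ((N : ℝ)⁻¹) ^ (k + 1) * f k (extC hN (k + 1) w)) (fun p => rfl)]
    rw [Fintype.sum_prod_type]
    have hterm : ∀ (v : Fin k → Fin N) (i : Fin N),
        f k (extC hN (k + 1) (Fin.snoc v i))
          = ‖X k (extC hN k v) - Ti k i (X k (extC hN k v))‖ ^ 2 := by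
      intro v i
      have hcoord : extC hN (k + 1) (Fin.snoc v i) k = i := by
        have hk : k < k + 1 := Nat.lt_succ_self k
        simp only [extC, dif_pos hk]
        have hlast : (⟨k, hk⟩ : Fin (k + 1)) = Fin.last k := rfl
        rw [hlast]
        exact Fin.snoc_last _ _
      have hXeq : X k (extC hN (k + 1) (Fin.snoc v i)) = X k (extC hN k v) := by
        apply hXdep
        intro j hj
        have hj' : j < k + 1 := hj.trans (Nat.lt_succ_self k)
        simp only [extC, dif_pos hj, dif_pos hj']
        have hcs : (⟨j, hj'⟩ : Fin (k + 1)) = Fin.castSucc ⟨j, hj⟩ := rfl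
        rw [hcs]
        exact Fin.snoc_castSucc _ _ _
      simp only [hfdef, hcoord, hXeq]
    calc ∑ v : Fin k → Fin N, ((N : ℝ)⁻¹) ^ k * g k (extC hN k v)
        = ∑ v : Fin k → Fin N, ((N : ℝ)⁻¹) ^ k
            * ∑ i, ‖X k (extC hN k v) - Ti k i (X k (extC hN k v))‖ ^ 2 := by
          refine Finset.sum_congr rfl fun v _ => ?_
          rw [hsum_i k (X k (extC hN k v))]
      _ = N * ∑ v : Fin k → Fin N, ∑ i,
            ((N : ℝ)⁻¹) ^ (k + 1) * f k (extC hN (k + 1) (Fin.snoc v i)) := by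
          rw [Finset.mul_sum]
          refine Finset.sum_congr rfl fun v _ => ?_
          rw [Finset.mul_sum, Finset.mul_sum]
          refine Finset.sum_congr rfl fun i _ => ?_
          rw [hterm v i, pow_succ]
          field_simp
          have h1 : (N : ℝ) * (1 / N) = 1 := by field_simp
          linear_combination (-(1 / (N : ℝ)) ^ k * ‖X k (extC hN k v) - Ti k i (X k (extC hN k v))‖ ^ 2) * h1
  -- telescoping
  have hlow : ∀ y, Fstar ≤ F y := fun y => hFstar.1 ⟨y, rfl⟩
  have htel : ∀ (ω : ℕ → Fin N) (K : ℕ),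
      a * ∑ k ∈ Finset.range K, f k ω ≤ F x0 - F (X K ω) := by
    intro ω K
    induction K with
    | zero => simp [hX0]
    | succ K ih =>
        have hd := hdec K (ω K) (X K ω)
        rw [hXsucc K ω, Finset.sum_range_succ, mul_add]
        have hfK : a * f K ω = a * ‖X K ω - Ti K (ω K) (X K ω)‖ ^ 2 := rfl
        linarith [hfK]
  have hfsum : ∀ (ω : ℕ → Fin N) (K : ℕ),
      ∑ k ∈ Finset.range K, f k ω ≤ (F x0 - Fstar) / a := by
    intro ω K
    rw [le_div_iff₀ ha]
    have := htel ω K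
    have := hlow (X K ω)
    linarith [mul_comm a (∑ k ∈ Finset.range K, f k ω)]
  -- integrated bound on partial sums of ∫ f
  have hIf : ∀ K, ∑ k ∈ Finset.range K, ∫ ω, f k ω ∂μ ≤ (F x0 - Fstar) / a := by
    intro K
    rw [← integral_finset_sum _ (fun k _ => hfint k)]
    calc ∫ ω, ∑ k ∈ Finset.range K, f k ω ∂μ
        ≤ ∫ _ω, (F x0 - Fstar) / a ∂μ := by
          apply integral_mono (integrable_finset_sum _ (fun k _ => hfint k))
            (integrable_const _)
          intro ω; exact hfsum ω K
      _ = (F x0 - Fstar) / a := by simp [measure_univ]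
  -- part 1
  have part1 : ∀ K₀ : ℕ, ∑ k ∈ Finset.range K₀, ∫ ω, g k ω ∂μ
      ≤ (N / a) * (F x0 - Fstar) := by
    intro K₀
    have : ∑ k ∈ Finset.range K₀, ∫ ω, g k ω ∂μ
        = N * ∑ k ∈ Finset.range K₀, ∫ ω, f k ω ∂μ := by
      rw [Finset.mul_sum]
      exact Finset.sum_congr rfl fun k _ => hkey k
    rw [this]
    calc (N : ℝ) * ∑ k ∈ Finset.range K₀, ∫ ω, f k ω ∂μ
        ≤ N * ((F x0 - Fstar) / a) :=
          mul_le_mul_of_nonneg_left (hIf K₀) hNR.le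
      _ = (N / a) * (F x0 - Fstar) := by ring
  refine ⟨part1, ?_⟩
  -- part 2 : almost sure convergence
  have hgnn : ∀ k ω, 0 ≤ g k ω := fun k ω => sq_nonneg _
  have hlin : ∀ k, ∫⁻ ω, ENNReal.ofReal (g k ω) ∂μ = ENNReal.ofReal (∫ ω, g k ω ∂μ) :=
    fun k => (ofReal_integral_eq_lintegral_ofReal (hgint k)
      (ae_of_all _ fun ω => hgnn k ω)).symm
  set B : ℝ := (N / a) * (F x0 - Fstar) with hB
  have htsum : ∑' k, ENNReal.ofReal (∫ ω, g k ω ∂μ) ≤ ENNReal.ofReal B := by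
    rw [ENNReal.tsum_eq_iSup_sum]
    refine iSup_le fun s => ?_
    obtain ⟨K, hK⟩ := s.exists_nat_subset_range
    calc ∑ k ∈ s, ENNReal.ofReal (∫ ω, g k ω ∂μ)
        ≤ ∑ k ∈ Finset.range K, ENNReal.ofReal (∫ ω, g k ω ∂μ) :=
          Finset.sum_le_sum_of_subset hK
      _ = ENNReal.ofReal (∑ k ∈ Finset.range K, ∫ ω, g k ω ∂μ) :=
          (ENNReal.ofReal_sum_of_nonneg fun k _ =>
            integral_nonneg (fun ω => hgnn k ω)).symm
      _ ≤ ENNReal.ofReal B := ENNReal.ofReal_le_ofReal (part1 K)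
  have hlint : ∫⁻ ω, ∑' k, ENNReal.ofReal (g k ω) ∂μ < ⊤ := by
    rw [lintegral_tsum fun k => ((hgmeas k).ennreal_ofReal).aemeasurable]
    calc ∑' k, ∫⁻ ω, ENNReal.ofReal (g k ω) ∂μ
        = ∑' k, ENNReal.ofReal (∫ ω, g k ω ∂μ) := by
          exact tsum_congr hlin
      _ ≤ ENNReal.ofReal B := htsum
      _ < ⊤ := ENNReal.ofReal_lt_top
  have hae : ∀ᵐ ω ∂μ, ∑' k, ENNReal.ofReal (g k ω) < ⊤ :=
    ae_lt_top (Measurable.ennreal_tsum fun k => (hgmeas k).ennreal_ofReal) hlint.ne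
  filter_upwards [hae] with ω hω
  have h0 : Tendsto (fun k => ENNReal.ofReal (g k ω)) atTop (nhds 0) :=
    ENNReal.tendsto_atTop_zero_of_tsum_ne_top hω.ne
  have h1 : Tendsto (fun k => g k ω) atTop (nhds 0) := by
    have h := (ENNReal.tendsto_toReal (by simp : (0 : ℝ≥0∞) ≠ ⊤)).comp h0
    have h' := h.congr fun k => ENNReal.toReal_ofReal (hgnn k ω)
    simpa using h'
  have h2 : Tendsto (fun k => Real.sqrt (g k ω)) atTop (nhds 0) := by
    have := (Real.continuous_sqrt.tendsto 0).comp h1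
    simpa [Function.comp_def] using this
  have heq : (fun k => ‖X k ω - T k (X k ω)‖) = fun k => Real.sqrt (g k ω) := by
    funext k
    simp only [hgdef]
    rw [Real.sqrt_sq (norm_nonneg _)]
  rw [heq]
  exact h2
end

section
/- Let E = Π_{i=1}^N E_i be a product of Euclidean spaces with norm ‖x‖² = Σ_i ‖x_i‖², let F : E → ℝ, x̄ ∈ E with F̄ = F(x̄), and let a > 0, η, ν > 0, 𝒩 > 0, β ∈ (0,1). Let Ω = ℕ → Fin N carry the product probability measure μ of uniform measures on Fin N. For each k let T^k_1,…,T^k_N : E → E satisfy, for every x ∈ E: F(T^k_i(x)) ≤ F(x) − a‖x − T^k_i(x)‖² for each i, and for every x with ‖x − x̄‖ ≤ η/2 and F̄ ≤ F(x) < F̄ + ν/𝒩: (1/N)Σ_{i=1}^N F(T^k_i(x)) − F̄ ≤ β(F(x) − F̄). Define X 0 ω = x⁰ and X (k+1) ω = T^k_{ω(k)}(X k ω), with F̄ ≤ F(x⁰) < F̄ + ν/𝒩 and ‖x⁰ − x̄‖ ≤ η/2, and suppose for μ-almost every ω and every k that ‖X k ω − x̄‖ ≤ η/2 and F̄ ≤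 F(X k ω) < F̄ + ν/𝒩. Let x̂ᵏ = ∫_Ω X k ω dμ(ω). Then ‖x̂ᵏ − x̂^{k+1}‖ ≤ M̂(√β)^k with M̂ = √((F(x⁰) − F̄)/a), and the sequence (x̂ᵏ) converges to a point x̂ ∈ E with ‖x̂ᵏ − x̂‖ ≤ (M̂/(1 − √β))(√β)^k for all k; in particular (x̂ᵏ) converges R-linearly. -/
open Filter MeasureTheory


/-- The deterministic tree of iterates: `vbG Ti x0 k σ` is the iterate after `k` steps when the
block choices are `σ 0, …, σ (k-1)`. -/
def vbG {N : ℕ} {α : Type*} (Ti : ℕ → Fin N → α → α) (x0 : α) : ∀ k, (Fin k → Fin N) → α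
  | 0, _ => x0
  | (k+1), σ => Ti k (σ (Fin.last k)) (vbG Ti x0 k (fun i => σ i.castSucc))

lemma vbG_succ {N : ℕ} {α : Type*} (Ti : ℕ → Fin N → α → α) (x0 : α) (k : ℕ)
    (σ : Fin (k+1) → Fin N) :
    vbG Ti x0 (k+1) σ = Ti k (σ (Fin.last k)) (vbG Ti x0 k (fun i => σ i.castSucc)) := rfl

/-- Measure of a cylinder. -/
lemma vb_cyl {N : ℕ} (μ : Measure ((k : ℕ) → Fin N)) [IsProbabilityMeasure μ]
    (hindep : ProbabilityTheory.iIndepFun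
      (fun k ω => ω k) μ)
    (hunif : ∀ (k : ℕ) (s : Fin N), μ {ω | ω k = s} = 1 / N)
    (m : ℕ) (σ : Fin m → Fin N) :
    μ ((fun ω (i : Fin m) => ω (i : ℕ)) ⁻¹' {σ}) = (1 / (N : ENNReal)) ^ m := by
  classical
  set sets : ℕ → Set (Fin N) := fun n => if h : n < m then {σ ⟨n, h⟩} else Set.univ with hsets
  have hmeas : ∀ i, i ∈ Finset.range m → MeasurableSet (sets i) := fun i _ => .of_discrete
  have hset : ((fun ω (i : Fin m) => ω (i : ℕ)) ⁻¹' {σ})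
      = ⋂ i ∈ Finset.range m, (fun ω : (k : ℕ) → Fin N => ω i) ⁻¹' sets i := by
    ext ω
    simp only [Set.mem_preimage, Set.mem_singleton_iff, funext_iff, Set.mem_iInter,
      Finset.mem_range, hsets]
    constructor
    · intro h n hn
      simp only [Set.mem_preimage, dif_pos hn]
      exact h ⟨n, hn⟩
    · intro h i
      have := h i.1 i.2
      simpa only [Set.mem_preimage, dif_pos i.2, Set.mem_singleton_iff, Fin.eta] using this
  rw [hset, hindep.measure_inter_preimage_eq_mul (Finset.range m) hmeas]
  have : ∀ i ∈ Finset.range m, μ ((fun ω : (k : ℕ) → Fin N => ω i) ⁻¹' sets i)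
      = 1 / (N : ENNReal) := by
    intro i hi
    rw [Finset.mem_range] at hi
    have : (fun ω : (k : ℕ) → Fin N => ω i) ⁻¹' sets i = {ω | ω i = σ ⟨i, hi⟩} := by
      simp only [hsets, dif_pos hi]; rfl
    rw [this, hunif]
  rw [Finset.prod_congr rfl this, Finset.prod_const, Finset.card_range]

/-- Expectation of a function of the first `m` coordinates. -/
lemma vb_integral {N : ℕ} (hN : 0 < N) {V : Type*} [NormedAddCommGroup V] [NormedSpace ℝ V] [CompleteSpace V]
    (μ : Measure ((k : ℕ) → Fin N)) [IsProbabilityMeasure μ]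
    (hindep : ProbabilityTheory.iIndepFun
      (fun k ω => ω k) μ)
    (hunif : ∀ (k : ℕ) (s : Fin N), μ {ω | ω k = s} = 1 / N)
    (m : ℕ) (u : (Fin m → Fin N) → V) :
    ∫ ω, u (fun i : Fin m => ω (i : ℕ)) ∂μ = ∑ σ : Fin m → Fin N, ((1 : ℝ) / N) ^ m • u σ := by
  classical
  set r : ((k : ℕ) → Fin N) → (Fin m → Fin N) := fun ω i => ω (i : ℕ) with hr'
  have hr : Measurable r := measurable_pi_lambda _ (fun i => measurable_pi_apply _)
  have hmap : ∀ σ : Fin m → Fin N, (μ.map r) {σ} = (1 / (N : ENNReal)) ^ m := by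
    intro σ
    rw [Measure.map_apply hr (measurableSet_singleton σ)]
    exact vb_cyl μ hindep hunif m σ
  have h1 : ∫ ω, u (r ω) ∂μ = ∫ τ, u τ ∂(μ.map r) :=
    (integral_map hr.aemeasurable (StronglyMeasurable.of_discrete).aestronglyMeasurable).symm
  have : IsProbabilityMeasure (μ.map r) := Measure.isProbabilityMeasure_map hr.aemeasurable
  rw [h1, integral_fintype (Integrable.of_finite)]
  refine Finset.sum_congr rfl fun σ _ => ?_
  rw [measureReal_def, hmap σ]
  congr 1
  simp [ENNReal.toReal_pow, ENNReal.toReal_div]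

/-- R-linear convergence of the expected iterates `x̂ᵏ = ∫ X k dμ` of the
VBSCD process: `‖x̂ᵏ - x̂ᵏ⁺¹‖ ≤ M̂(√β)ᵏ` and `(x̂ᵏ)` converges to some `x̂` with
`‖x̂ᵏ - x̂‖ ≤ (M̂/(1-√β))(√β)ᵏ`. -/
theorem stmt_18 {N : ℕ} (hN : 0 < N) (E : Fin N → Type*)
    [∀ i, NormedAddCommGroup (E i)] [∀ i, InnerProductSpace ℝ (E i)]
    [∀ i, FiniteDimensional ℝ (E i)]
    (F : PiLp 2 E → ℝ) (xbar : PiLp 2 E) (Fbar : ℝ) (hFbar : Fbar = F xbar)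
    (a η ν 𝒩 β : ℝ) (ha : 0 < a) (hη : 0 < η) (hν : 0 < ν) (h𝒩 : 0 < 𝒩)
    (hβ : β ∈ Set.Ioo (0 : ℝ) 1)
    (μ : Measure ((k : ℕ) → Fin N)) [IsProbabilityMeasure μ]
    (hindep : ProbabilityTheory.iIndepFun
      (fun k ω => ω k) μ)
    (hunif : ∀ (k : ℕ) (s : Fin N), μ {ω | ω k = s} = 1 / N)
    (Ti : ℕ → Fin N → PiLp 2 E → PiLp 2 E)
    (hdec : ∀ k i x, F (Ti k i x) ≤ F x - a * ‖x - Ti k i x‖ ^ 2)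
    (hcontr : ∀ k x, ‖x - xbar‖ ≤ η / 2 → Fbar ≤ F x → F x < Fbar + ν / 𝒩 →
      ((1 : ℝ) / N) * ∑ i, F (Ti k i x) - Fbar ≤ β * (F x - Fbar))
    (x0 : PiLp 2 E) (hx0lo : Fbar ≤ F x0) (hx0hi : F x0 < Fbar + ν / 𝒩)
    (hx0ball : ‖x0 - xbar‖ ≤ η / 2)
    (X : ℕ → ((k : ℕ) → Fin N) → PiLp 2 E)
    (hX0 : ∀ ω, X 0 ω = x0)
    (hXsucc : ∀ k ω, X (k + 1) ω = Ti k (ω k) (X k ω))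
    (htrap : ∀ᵐ ω ∂μ, ∀ k, ‖X k ω - xbar‖ ≤ η / 2 ∧ Fbar ≤ F (X k ω)
      ∧ F (X k ω) < Fbar + ν / 𝒩)
    (xhat : ℕ → PiLp 2 E) (hxhat : ∀ k, xhat k = ∫ ω, X k ω ∂μ)
    (Mhat : ℝ) (hMhat : Mhat = Real.sqrt ((F x0 - Fbar) / a)) :
    (∀ k, ‖xhat k - xhat (k + 1)‖ ≤ Mhat * (Real.sqrt β) ^ k)
    ∧ (∃ xhatlim : PiLp 2 E, Tendsto xhat atTop (nhds xhatlim)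
        ∧ ∀ k, ‖xhat k - xhatlim‖ ≤ (Mhat / (1 - Real.sqrt β)) * (Real.sqrt β) ^ k) := by
  classical
  obtain ⟨hβ0, hβ1⟩ := hβ
  have hN' : (0 : ℝ) < N := Nat.cast_pos.2 hN
  set g := vbG Ti x0 with hg
  -- `X k` in terms of the deterministic tree
  have hXg : ∀ k ω, X k ω = g k (fun i : Fin k => ω (i : ℕ)) := by
    intro k
    induction k with
    | zero => intro ω; rw [hX0]; rfl
    | succ k ih =>
      intro ω
      rw [hXsucc, ih, hg, vbG_succ]
      simp [Fin.val_last, Fin.coe_castSucc]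
  -- every node of the tree is trapped
  have hnode : ∀ (k : ℕ) (τ : Fin k → Fin N),
      ‖g k τ - xbar‖ ≤ η / 2 ∧ Fbar ≤ F (g k τ) ∧ F (g k τ) < Fbar + ν / 𝒩 := by
    intro k τ
    have hμτ : μ ((fun ω (i : Fin k) => ω (i : ℕ)) ⁻¹' {τ}) = (1 / (N : ENNReal)) ^ k :=
      vb_cyl μ hindep hunif k τ
    have hne : μ ((fun ω (i : Fin k) => ω (i : ℕ)) ⁻¹' {τ}) ≠ 0 := by
      rw [hμτ]
      apply pow_ne_zero
      simp [hN.ne']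
    have hbad : μ {ω | ¬ ∀ k, ‖X k ω - xbar‖ ≤ η / 2 ∧ Fbar ≤ F (X k ω)
        ∧ F (X k ω) < Fbar + ν / 𝒩} = 0 := htrap
    have hns : ¬ ((fun ω (i : Fin k) => ω (i : ℕ)) ⁻¹' {τ}
        ⊆ {ω | ¬ ∀ k, ‖X k ω - xbar‖ ≤ η / 2 ∧ Fbar ≤ F (X k ω)
          ∧ F (X k ω) < Fbar + ν / 𝒩}) := fun hsub => hne (measure_mono_null hsub hbad)
    obtain ⟨ω, hωc, hωp⟩ := Set.not_subset.1 hns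
    rw [Set.mem_setOf_eq, not_not] at hωp
    have h := hωp k
    rw [hXg k ω] at h
    have hτ : (fun i : Fin k => ω (i : ℕ)) = τ := hωc
    rwa [hτ] at h
  -- weights
  set w : ℕ → ℝ := fun m => ((1 : ℝ) / N) ^ m with hw
  have hwpos : ∀ m, 0 < w m := fun m => pow_pos (by positivity) m
  have hwN : ∀ m, (N : ℝ) * w (m + 1) = w m := by
    intro m
    show (N : ℝ) * (1 / N) ^ (m + 1) = (1 / N) ^ m
    rw [pow_succ, mul_comm ((1 / (N : ℝ)) ^ m), ← mul_assoc, mul_one_div_cancel hN'.ne', one_mul]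
  -- expected objective gap
  set Φ : ℕ → ℝ := fun k => ∑ σ : Fin k → Fin N, w k * (F (g k σ) - Fbar) with hΦ
  have hΦ0 : Φ 0 = F x0 - Fbar := by
    rw [show Φ 0 = ∑ σ : Fin 0 → Fin N, w 0 * (F (g 0 σ) - Fbar) from rfl,
      Fintype.sum_unique]
    show (1 / (N : ℝ)) ^ 0 * (F x0 - Fbar) = _
    rw [pow_zero, one_mul]
  have hΦnn : ∀ k, 0 ≤ Φ k := by
    intro k
    refine Finset.sum_nonneg fun τ _ => mul_nonneg (hwpos k).le ?_
    linarith [(hnode k τ).2.1]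
  -- the snoc equivalence
  have hinit : ∀ (k : ℕ) (p : Fin N × (Fin k → Fin N)),
      (fun i : Fin k => (Fin.snocEquiv (fun _ => Fin N) p) i.castSucc) = p.2 := by
    intro k p
    funext i
    simp [Fin.snocEquiv]
  have hlast : ∀ (k : ℕ) (p : Fin N × (Fin k → Fin N)),
      (Fin.snocEquiv (fun _ => Fin N) p) (Fin.last k) = p.1 := by
    intro k p
    simp [Fin.snocEquiv]
  have hgsucc : ∀ (k : ℕ) (p : Fin N × (Fin k → Fin N)),
      g (k + 1) (Fin.snocEquiv (fun _ => Fin N) p) = Ti k p.1 (g k p.2) := by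
    intro k p
    rw [hg, vbG_succ, ← hg, hlast, hinit]
  -- the "init" sum identity
  have hAsum : ∀ (k : ℕ) (h : (Fin k → Fin N) → ℝ),
      ∑ σ : Fin (k + 1) → Fin N, w (k + 1) * h (fun i : Fin k => σ i.castSucc)
        = ∑ τ : Fin k → Fin N, w k * h τ := by
    intro k h
    rw [← Equiv.sum_comp (Fin.snocEquiv (fun _ => Fin N))
      (fun σ => w (k + 1) * h (fun i : Fin k => σ i.castSucc)), Fintype.sum_prod_type]
    have hcongr : ∀ i : Fin N, (∑ τ : Fin k → Fin N, w (k + 1)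
        * h (fun j : Fin k => (Fin.snocEquiv (fun _ => Fin N) (i, τ)) j.castSucc))
        = ∑ τ : Fin k → Fin N, w (k + 1) * h τ := by
      intro i
      refine Finset.sum_congr rfl fun τ _ => ?_
      rw [hinit k (i, τ)]
    rw [Finset.sum_congr rfl fun i _ => hcongr i, Finset.sum_const, Finset.card_univ,
      Fintype.card_fin, nsmul_eq_mul, Finset.mul_sum]
    refine Finset.sum_congr rfl fun τ _ => ?_
    rw [← mul_assoc, hwN]
  -- one-step contraction of Φ
  have hΦsucc : ∀ k, Φ (k + 1) ≤ β * Φ k := by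
    intro k
    have hre : Φ (k + 1) = ∑ τ : Fin k → Fin N, ∑ i : Fin N,
        w (k + 1) * (F (Ti k i (g k τ)) - Fbar) := by
      rw [show Φ (k + 1) = ∑ σ : Fin (k + 1) → Fin N, w (k + 1) * (F (g (k + 1) σ) - Fbar)
          from rfl,
        ← Equiv.sum_comp (Fin.snocEquiv (fun _ => Fin N))
        (fun σ => w (k + 1) * (F (g (k + 1) σ) - Fbar))]
      rw [Fintype.sum_prod_type, Finset.sum_comm]
      refine Finset.sum_congr rfl fun τ _ => Finset.sum_congr rfl fun i _ => ?_
      rw [hgsucc k (i, τ)]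
    rw [hre, show Φ k = ∑ σ : Fin k → Fin N, w k * (F (g k σ) - Fbar) from rfl,
      Finset.mul_sum]
    refine Finset.sum_le_sum fun τ _ => ?_
    obtain ⟨hb, hlo, hhi⟩ := hnode k τ
    have hc := hcontr k (g k τ) hb hlo hhi
    have hsum : ∑ i : Fin N, (F (Ti k i (g k τ)) - Fbar)
        ≤ (N : ℝ) * (β * (F (g k τ) - Fbar)) := by
      have heq : ∑ i : Fin N, (F (Ti k i (g k τ)) - Fbar)
          = (N : ℝ) * ((1 / N) * ∑ i, F (Ti k i (g k τ)) - Fbar) := by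
        rw [Finset.sum_sub_distrib, Finset.sum_const, Finset.card_univ, Fintype.card_fin,
          nsmul_eq_mul, mul_sub, ← mul_assoc, mul_one_div_cancel hN'.ne', one_mul]
      rw [heq]
      exact mul_le_mul_of_nonneg_left hc hN'.le
    calc ∑ i : Fin N, w (k + 1) * (F (Ti k i (g k τ)) - Fbar)
        = w (k + 1) * ∑ i : Fin N, (F (Ti k i (g k τ)) - Fbar) := by rw [Finset.mul_sum]
      _ ≤ w (k + 1) * ((N : ℝ) * (β * (F (g k τ) - Fbar))) :=
          mul_le_mul_of_nonneg_left hsum (hwpos _).le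
      _ = β * (w k * (F (g k τ) - Fbar)) := by
          rw [← mul_assoc, mul_comm (w (k + 1)) (N : ℝ), hwN]; ring
  have hΦle : ∀ k, Φ k ≤ β ^ k * (F x0 - Fbar) := by
    intro k
    induction k with
    | zero => rw [pow_zero, one_mul]; exact hΦ0.le
    | succ k ih =>
      calc Φ (k + 1) ≤ β * Φ k := hΦsucc k
        _ ≤ β * (β ^ k * (F x0 - Fbar)) := mul_le_mul_of_nonneg_left ih hβ0.le
        _ = β ^ (k + 1) * (F x0 - Fbar) := by ring
  -- the one-step norm bound
  have part1 : ∀ k, ‖xhat k - xhat (k + 1)‖ ≤ Mhat * (Real.sqrt β) ^ k := by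
    intro k
    -- express the expectations as sums over nodes at depth k+1
    have hx1 : xhat k = ∑ σ : Fin (k + 1) → Fin N,
        w (k + 1) • g k (fun i : Fin k => σ i.castSucc) := by
      rw [hxhat]
      have heq : (fun ω : (j : ℕ) → Fin N => X k ω)
          = fun ω => (fun σ : Fin (k + 1) → Fin N => g k (fun i : Fin k => σ i.castSucc))
              (fun i : Fin (k + 1) => ω (i : ℕ)) := by
        funext ω
        rw [hXg k ω]
        congr 1
      rw [heq, vb_integral hN μ hindep hunif (k + 1)
        (fun σ : Fin (k + 1) → Fin N => g k (fun i : Fin k => σ i.castSucc))]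
    have hx2 : xhat (k + 1) = ∑ σ : Fin (k + 1) → Fin N, w (k + 1) • g (k + 1) σ := by
      rw [hxhat]
      have heq : (fun ω : (j : ℕ) → Fin N => X (k + 1) ω)
          = fun ω => g (k + 1) (fun i : Fin (k + 1) => ω (i : ℕ)) := by
        funext ω; exact hXg (k + 1) ω
      rw [heq, vb_integral hN μ hindep hunif (k + 1) (g (k + 1))]
    set d : (Fin (k + 1) → Fin N) → PiLp 2 E :=
      fun σ => g k (fun i : Fin k => σ i.castSucc) - g (k + 1) σ with hd
    have hdiff : xhat k - xhat (k + 1) = ∑ σ : Fin (k + 1) → Fin N, w (k + 1) • d σ := by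
      rw [hx1, hx2, ← Finset.sum_sub_distrib]
      exact Finset.sum_congr rfl fun σ _ => (smul_sub _ _ _).symm
    set t : (Fin (k + 1) → Fin N) → ℝ := fun σ => ‖d σ‖ with ht
    have hnorm : ‖xhat k - xhat (k + 1)‖ ≤ ∑ σ : Fin (k + 1) → Fin N, w (k + 1) * t σ := by
      rw [hdiff]
      refine (norm_sum_le _ _).trans (le_of_eq (Finset.sum_congr rfl fun σ _ => ?_))
      rw [norm_smul, Real.norm_of_nonneg (hwpos _).le]
    have hsumw : ∑ _σ : Fin (k + 1) → Fin N, w (k + 1) = 1 := by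
      rw [Finset.sum_const, Finset.card_univ, Fintype.card_fun, Fintype.card_fin,
        Fintype.card_fin, nsmul_eq_mul]
      show ((N ^ (k + 1) : ℕ) : ℝ) * (1 / N) ^ (k + 1) = 1
      push_cast
      rw [← mul_pow, mul_one_div_cancel hN'.ne', one_pow]
    -- Cauchy-Schwarz
    have hCS : (∑ σ : Fin (k + 1) → Fin N, w (k + 1) * t σ) ^ 2
        ≤ ∑ σ : Fin (k + 1) → Fin N, w (k + 1) * t σ ^ 2 := by
      have h := Finset.sum_mul_sq_le_sq_mul_sq Finset.univ
        (fun _σ : Fin (k + 1) → Fin N => Real.sqrt (w (k + 1)))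
        (fun σ => Real.sqrt (w (k + 1)) * t σ)
      have e1 : ∀ σ : Fin (k + 1) → Fin N,
          Real.sqrt (w (k + 1)) * (Real.sqrt (w (k + 1)) * t σ) = w (k + 1) * t σ := by
        intro σ; rw [← mul_assoc, Real.mul_self_sqrt (hwpos _).le]
      have e2 : ∀ σ : Fin (k + 1) → Fin N,
          (Real.sqrt (w (k + 1)) * t σ) ^ 2 = w (k + 1) * t σ ^ 2 := by
        intro σ; rw [mul_pow, Real.sq_sqrt (hwpos _).le]
      have e3 : ∑ _σ : Fin (k + 1) → Fin N, Real.sqrt (w (k + 1)) ^ 2 = 1 := by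
        rw [← hsumw]
        exact Finset.sum_congr rfl fun σ _ => Real.sq_sqrt (hwpos _).le
      calc (∑ σ : Fin (k + 1) → Fin N, w (k + 1) * t σ) ^ 2
          = (∑ σ : Fin (k + 1) → Fin N,
              Real.sqrt (w (k + 1)) * (Real.sqrt (w (k + 1)) * t σ)) ^ 2 := by
            rw [Finset.sum_congr rfl fun σ _ => (e1 σ)]
        _ ≤ (∑ _σ : Fin (k + 1) → Fin N, Real.sqrt (w (k + 1)) ^ 2)
              * ∑ σ : Fin (k + 1) → Fin N, (Real.sqrt (w (k + 1)) * t σ) ^ 2 := h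
        _ = ∑ σ : Fin (k + 1) → Fin N, w (k + 1) * t σ ^ 2 := by
            rw [e3, one_mul]
            exact Finset.sum_congr rfl fun σ _ => e2 σ
    -- per-branch decrease
    have hsum_t2 : ∑ σ : Fin (k + 1) → Fin N, w (k + 1) * t σ ^ 2
        ≤ (Φ k - Φ (k + 1)) / a := by
      rw [le_div_iff₀ ha, ← mul_comm a, Finset.mul_sum]
      have hterm : ∀ σ : Fin (k + 1) → Fin N, a * (w (k + 1) * t σ ^ 2)
          ≤ w (k + 1) * (F (g k (fun i : Fin k => σ i.castSucc)) - F (g (k + 1) σ)) := by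
        intro σ
        have hT : g (k + 1) σ = Ti k (σ (Fin.last k)) (g k (fun i : Fin k => σ i.castSucc)) := by
          rw [hg, vbG_succ]
        have hd' := hdec k (σ (Fin.last k)) (g k (fun i : Fin k => σ i.castSucc))
        rw [← hT] at hd'
        have ht2 : a * t σ ^ 2 ≤ F (g k (fun i : Fin k => σ i.castSucc)) - F (g (k + 1) σ) := by
          have : t σ = ‖g k (fun i : Fin k => σ i.castSucc) - g (k + 1) σ‖ := rfl
          rw [this]; linarith
        calc a * (w (k + 1) * t σ ^ 2) = w (k + 1) * (a * t σ ^ 2) := by ring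
          _ ≤ w (k + 1) * (F (g k (fun i : Fin k => σ i.castSucc)) - F (g (k + 1) σ)) :=
              mul_le_mul_of_nonneg_left ht2 (hwpos _).le
      refine (Finset.sum_le_sum fun σ _ => hterm σ).trans (le_of_eq ?_)
      have hsplit : ∀ σ : Fin (k + 1) → Fin N,
          w (k + 1) * (F (g k (fun i : Fin k => σ i.castSucc)) - F (g (k + 1) σ))
            = w (k + 1) * (F (g k (fun i : Fin k => σ i.castSucc)) - Fbar)
              - w (k + 1) * (F (g (k + 1) σ) - Fbar) := by intro σ; ring
      rw [Finset.sum_congr rfl fun σ _ => hsplit σ, Finset.sum_sub_distrib,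
        hAsum k (fun τ => F (g k τ) - Fbar)]
    have hΦbound : ∑ σ : Fin (k + 1) → Fin N, w (k + 1) * t σ ^ 2
        ≤ β ^ k * ((F x0 - Fbar) / a) := by
      calc ∑ σ : Fin (k + 1) → Fin N, w (k + 1) * t σ ^ 2 ≤ (Φ k - Φ (k + 1)) / a := hsum_t2
        _ ≤ Φ k / a := by gcongr; linarith [hΦnn (k + 1)]
        _ ≤ β ^ k * (F x0 - Fbar) / a := by gcongr; exact hΦle k
        _ = β ^ k * ((F x0 - Fbar) / a) := by ring
    have htnn : 0 ≤ ∑ σ : Fin (k + 1) → Fin N, w (k + 1) * t σ :=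
      Finset.sum_nonneg fun σ _ => mul_nonneg (hwpos _).le (norm_nonneg _)
    have hfinal : ∑ σ : Fin (k + 1) → Fin N, w (k + 1) * t σ
        ≤ Real.sqrt (β ^ k * ((F x0 - Fbar) / a)) := by
      rw [← Real.sqrt_sq htnn]
      exact Real.sqrt_le_sqrt (hCS.trans hΦbound)
    have hsplit : Real.sqrt (β ^ k * ((F x0 - Fbar) / a))
        = Mhat * (Real.sqrt β) ^ k := by
      rw [Real.sqrt_mul (pow_nonneg hβ0.le k), hMhat]
      rw [show β ^ k = ((Real.sqrt β) ^ k) ^ 2 by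
        rw [← pow_mul, mul_comm, pow_mul, Real.sq_sqrt hβ0.le]]
      rw [Real.sqrt_sq (pow_nonneg (Real.sqrt_nonneg β) k)]
      ring
    exact hnorm.trans (hfinal.trans_eq hsplit)
  -- convergence
  have hr1 : Real.sqrt β < 1 := by
    rw [Real.sqrt_lt' one_pos]
    simpa using hβ1
  have hdist : ∀ n, dist (xhat n) (xhat (n + 1)) ≤ Mhat * (Real.sqrt β) ^ n := by
    intro n; rw [dist_eq_norm]; exact part1 n
  have hcauchy : CauchySeq xhat := cauchySeq_of_le_geometric _ _ hr1 hdist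
  obtain ⟨l, hl⟩ := cauchySeq_tendsto_of_complete hcauchy
  refine ⟨part1, l, hl, fun n => ?_⟩
  have h := dist_le_of_le_geometric_of_tendsto (Real.sqrt β) Mhat hr1 hdist hl n
  rw [dist_eq_norm] at h
  calc ‖xhat n - l‖ ≤ Mhat * (Real.sqrt β) ^ n / (1 - Real.sqrt β) := h
    _ = Mhat / (1 - Real.sqrt β) * (Real.sqrt β) ^ n := by ring
end
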